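/- arXiv:1512.05244 — 11 statements merged into one kernel-verified Lean document; each statement's English description precedes it below -/
import Mathlib

section
/- Let m ≥ 1, let φ_e, φ_r : ℝ → ℝ be differentiable and strictly convex, and let μ_e, μ_r > 0. Assume that for every z ∈ ℝ^m the infimum defining L_e*(z) is attained at a unique point p*(z) ∈ ℝ^m and the infimum defining L_r*(z) is attained at a unique point q*(z) with Σ_{I⊆[m]} q*_I(z) = 1. Then φ_e and φ_r (with μ_e, μ_r) are proportionate for m if and only if for every z ∈ ℝ^m and every i ∈ [m], p*_i(z) = Σ_{I⊆[m], i∈I} q*_I(z). -/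
/-!
Both `z ↦ L_e(p*(z), z)` and `z ↦ L_r(q*(z), z)` are infima of functions affine in `z`, so
they are concave with supergradients `p*(z)` and `G_m q*(z)` at `z`. If `p* = G_m q*`, the two
concave functions share a supergradient everywhere; summing the supergradient inequalities
along a finely subdivided segment shows that their difference is constant. Conversely, if
they differ by a constant then `G_m q*(z)` is a supergradient of `L_e*` at `z`. Every `v` is
the minimiser of `L_e(·, z₀)` for `z₀ = -μ_e φ_e'(v)`, by convexity of `φ_e`, and the
supergradient inequality between `z₀` and `z` makes `v` a minimiser of `L_e(·, z)`, hence
`v = p*(z)` by uniqueness.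
-/

/-- The example-side game value
`L_e(p, z) = Σ_{i∈[m]} p_i z_i + μ_e Σ_{i∈[m]} φ_e(p_i)`. -/
noncomputable def gameLe (m : ℕ) (φe : ℝ → ℝ) (μe : ℝ) (p z : Fin m → ℝ) : ℝ :=
  ∑ i, p i * z i + μe * ∑ i, φe (p i)

/-- The rado-side game value
`L_r(q, z) = Σ_{I⊆[m]} q_I Σ_{i∈I} z_i + μ_r Σ_{I⊆[m]} φ_r(q_I)`. -/
noncomputable def gameLr (m : ℕ) (φr : ℝ → ℝ) (μr : ℝ) (q : Finset (Fin m) → ℝ)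
    (z : Fin m → ℝ) : ℝ :=
  ∑ I : Finset (Fin m), q I * ∑ i ∈ I, z i + μr * ∑ I : Finset (Fin m), φr (q I)

open Finset Matrix

section CommonSupergradient

variable {E : Type*} [AddCommGroup E] [Module ℝ E] {f g : E → ℝ} {s : E → Module.Dual ℝ E}

theorem sub_sub_le_of_supergradient (hf : ∀ z z', f z' ≤ f z + s z (z' - z))
    (hg : ∀ z z', g z' ≤ g z + s z (z' - z)) (x y : E) :
    (f y - g y) - (f x - g x) ≤ (s x - s y) (y - x) := by
  have hfxy := hf x y
  have hgyx := hg y x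
  rw [← neg_sub, map_neg] at hgyx
  rw [LinearMap.sub_apply]
  linarith

theorem exists_eq_add_const_of_supergradient (hf : ∀ z z', f z' ≤ f z + s z (z' - z))
    (hg : ∀ z z', g z' ≤ g z + s z (z' - z)) : ∃ b, ∀ z, f z = g z + b := by
  set D : E → ℝ := fun z => f z - g z
  -- Along `n` equal steps from `x` to `y` the increments of `D` are bounded by a telescoping
  -- sum of `s`, which leaves a total of `O(1 / n)`.
  have hbound (x y : E) (n : ℕ) (hn : 1 ≤ n) : D y - D x ≤ (s x - s y) (y - x) / n := by
    have hn0 : (n : ℝ) ≠ 0 := by positivity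
    set c : ℕ → E := fun k => x + ((k : ℝ) / n) • (y - x)
    have hc0 : c 0 = x := by simp [c]
    have hcn : c n = y := by simp [c, hn0]
    have hstep (k : ℕ) : c (k + 1) - c k = (n : ℝ)⁻¹ • (y - x) := by
      simp only [c, add_sub_add_left_eq_sub, ← sub_smul]
      congr 1
      push_cast
      field_simp
      ring
    calc D y - D x = ∑ k ∈ range n, (D (c (k + 1)) - D (c k)) := by
          rw [sum_range_sub (fun k => D (c k)), hc0, hcn]
      _ ≤ ∑ k ∈ range n, (s (c k) - s (c (k + 1))) ((n : ℝ)⁻¹ • (y - x)) := by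
          gcongr with k
          have h := sub_sub_le_of_supergradient hf hg (c k) (c (k + 1))
          rwa [hstep] at h
      _ = (s x - s y) (y - x) / n := by
          rw [← LinearMap.sum_apply, sum_range_sub', hc0, hcn, map_smul, smul_eq_mul,
            inv_mul_eq_div]
  have hle (x y : E) : D y ≤ D x := by
    have := ge_of_tendsto (tendsto_const_div_atTop_nhds_zero_nat ((s x - s y) (y - x)))
      (Filter.eventually_atTop.2 ⟨1, hbound x y⟩)
    linarith
  exact ⟨D 0, fun z => by linarith [hle 0 z, hle z 0]⟩

end CommonSupergradient

theorem ConvexOn.add_mul_sub_le_of_hasDerivAt {φ : ℝ → ℝ} {φ' v : ℝ}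
    (hφ : ConvexOn ℝ Set.univ φ) (hd : HasDerivAt φ φ' v) (t : ℝ) :
    φ v + φ' * (t - v) ≤ φ t := by
  rcases lt_trichotomy t v with htv | rfl | hvt
  · have h := hφ.slope_le_of_hasDerivAt (Set.mem_univ t) (Set.mem_univ v) htv hd
    rw [slope_def_field, div_le_iff₀ (sub_pos.2 htv)] at h
    linarith
  · simp
  · have h := hφ.le_slope_of_hasDerivAt (Set.mem_univ v) (Set.mem_univ t) hvt hd
    rw [slope_def_field, le_div_iff₀ (sub_pos.2 hvt)] at h
    linarith

/-- The paper's `G_m q`. -/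
def marginal {α : Type*} [Fintype α] [DecidableEq α] (q : Finset α → ℝ) (i : α) : ℝ :=
  ∑ I, if i ∈ I then q I else 0

theorem sum_mul_sum_eq_marginal_dotProduct {α : Type*} [Fintype α] [DecidableEq α]
    (q : Finset α → ℝ) (w : α → ℝ) :
    ∑ I, q I * ∑ i ∈ I, w i = marginal q ⬝ᵥ w := by
  simp only [dotProduct, marginal, sum_mul, ite_mul, zero_mul, mul_sum]
  rw [sum_comm]
  refine sum_congr rfl fun I _ => ?_
  rw [← sum_filter, filter_mem_eq_inter, univ_inter]

section Games

variable {m : ℕ}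

theorem gameLe_eq_add_dotProduct_sub (φe : ℝ → ℝ) (μe : ℝ) (p z z' : Fin m → ℝ) :
    gameLe m φe μe p z' = gameLe m φe μe p z + p ⬝ᵥ (z' - z) := by
  change p ⬝ᵥ z' + _ = (p ⬝ᵥ z + _) + _
  rw [dotProduct_sub]
  ring

theorem gameLr_eq_add_dotProduct_sub (φr : ℝ → ℝ) (μr : ℝ) (q : Finset (Fin m) → ℝ)
    (z z' : Fin m → ℝ) :
    gameLr m φr μr q z' = gameLr m φr μr q z + marginal q ⬝ᵥ (z' - z) := by
  simp only [gameLr, sum_mul_sum_eq_marginal_dotProduct, dotProduct_sub]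
  ring

theorem gameLe_le_of_eq_neg_deriv {φe : ℝ → ℝ} {μe : ℝ} (hφe_diff : Differentiable ℝ φe)
    (hφe_conv : ConvexOn ℝ Set.univ φe) (hμe : 0 ≤ μe) (v p : Fin m → ℝ) :
    gameLe m φe μe v (fun j => -(μe * deriv φe (v j)))
      ≤ gameLe m φe μe p (fun j => -(μe * deriv φe (v j))) := by
  simp only [gameLe, mul_sum, ← sum_add_distrib]
  refine sum_le_sum fun j _ => ?_
  have := mul_le_mul_of_nonneg_left
    (hφe_conv.add_mul_sub_le_of_hasDerivAt (hφe_diff (v j)).hasDerivAt (p j)) hμe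
  linarith

theorem eq_pstar_of_supergradient {φe : ℝ → ℝ} {μe : ℝ} (hφe_diff : Differentiable ℝ φe)
    (hφe_conv : ConvexOn ℝ Set.univ φe) (hμe : 0 ≤ μe) {pstar : (Fin m → ℝ) → (Fin m → ℝ)}
    (hp_min : ∀ z p, gameLe m φe μe (pstar z) z ≤ gameLe m φe μe p z)
    (hp_uniq : ∀ z p, gameLe m φe μe p z = gameLe m φe μe (pstar z) z → p = pstar z)
    {z v : Fin m → ℝ}
    (hv : ∀ z', gameLe m φe μe (pstar z') z' ≤ gameLe m φe μe (pstar z) z + v ⬝ᵥ (z' - z)) :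
    v = pstar z := by
  set z₀ : Fin m → ℝ := fun j => -(μe * deriv φe (v j))
  refine hp_uniq z v (le_antisymm ?_ (hp_min z v))
  have hsuper := hv z₀
  have hmin := gameLe_le_of_eq_neg_deriv hφe_diff hφe_conv hμe v (pstar z₀)
  rw [gameLe_eq_add_dotProduct_sub φe μe v z z₀] at hmin
  linarith

end Games

theorem stmt0_general (m : ℕ) (φe φr : ℝ → ℝ)
    (hφe_diff : Differentiable ℝ φe)
    (hφe_conv : StrictConvexOn ℝ Set.univ φe)
    (μe μr : ℝ) (hμe : 0 < μe)
    (pstar : (Fin m → ℝ) → (Fin m → ℝ))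
    (qstar : (Fin m → ℝ) → (Finset (Fin m) → ℝ))
    -- the infimum defining `L_e*(z)` is attained at the unique point `p*(z)`
    (hp_min : ∀ z p, gameLe m φe μe (pstar z) z ≤ gameLe m φe μe p z)
    (hp_uniq : ∀ z p, gameLe m φe μe p z = gameLe m φe μe (pstar z) z → p = pstar z)
    -- the infimum defining `L_r*(z)` is attained at the unique point `q*(z)`,
    -- which satisfies `Σ_{I⊆[m]} q*_I(z) = 1`
    (hq_sum : ∀ z, ∑ I : Finset (Fin m), qstar z I = 1)
    (hq_min : ∀ z q, ∑ I : Finset (Fin m), q I = 1 →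
      gameLr m φr μr (qstar z) z ≤ gameLr m φr μr q z) :
    -- proportionate (for this `m`, with these `μ_e, μ_r`) iff `p* = G_m q*`
    (∃ b : ℝ, ∀ z, gameLe m φe μe (pstar z) z = gameLr m φr μr (qstar z) z + b) ↔
    (∀ z (i : Fin m), pstar z i =
      ∑ I : Finset (Fin m), if i ∈ I then qstar z I else 0) := by
  have hLe (z z' : Fin m → ℝ) : gameLe m φe μe (pstar z') z'
      ≤ gameLe m φe μe (pstar z) z + pstar z ⬝ᵥ (z' - z) :=
    (hp_min z' (pstar z)).trans_eq (gameLe_eq_add_dotProduct_sub φe μe _ z z')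
  have hLr (z z' : Fin m → ℝ) : gameLr m φr μr (qstar z') z'
      ≤ gameLr m φr μr (qstar z) z + marginal (qstar z) ⬝ᵥ (z' - z) :=
    (hq_min z' (qstar z) (hq_sum z)).trans_eq (gameLr_eq_add_dotProduct_sub φr μr _ z z')
  constructor
  · rintro ⟨b, hb⟩ z i
    have hv (z' : Fin m → ℝ) : gameLe m φe μe (pstar z') z'
        ≤ gameLe m φe μe (pstar z) z + marginal (qstar z) ⬝ᵥ (z' - z) := by
      rw [hb, hb]
      linarith [hLr z z']
    exact (congrFun (eq_pstar_of_supergradient hφe_diff hφe_conv.convexOn hμe.le hp_min hp_uniq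
      hv) i).symm
  · intro hpq
    have hmarginal (z : Fin m → ℝ) : marginal (qstar z) = pstar z :=
      funext fun i => (hpq z i).symm
    exact exists_eq_add_const_of_supergradient (s := fun z => dotProductBilin ℝ ℝ (pstar z))
      hLe (fun z z' => (hmarginal z) ▸ hLr z z')

/-- Theorem 1 (differentiable case): with `φ_e, φ_r` differentiable and strictly
convex, and the infima defining `L_e*` and `L_r*` attained at unique points
`p*(z)` (resp. `q*(z)` on the hyperplane `Σ_I q_I = 1`), the generators are
proportionate iff `p*(z) = G_m q*(z)`, i.e. `p*_i(z) = Σ_{I ∋ i} q*_I(z)` for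
all `z` and `i`. -/
theorem stmt0 (m : ℕ) (hm : 1 ≤ m) (φe φr : ℝ → ℝ)
    (hφe_diff : Differentiable ℝ φe) (hφr_diff : Differentiable ℝ φr)
    (hφe_conv : StrictConvexOn ℝ Set.univ φe)
    (hφr_conv : StrictConvexOn ℝ Set.univ φr)
    (μe μr : ℝ) (hμe : 0 < μe) (hμr : 0 < μr)
    (pstar : (Fin m → ℝ) → (Fin m → ℝ))
    (qstar : (Fin m → ℝ) → (Finset (Fin m) → ℝ))
    -- the infimum defining `L_e*(z)` is attained at the unique point `p*(z)`
    (hp_min : ∀ z p, gameLe m φe μe (pstar z) z ≤ gameLe m φe μe p z)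
    (hp_uniq : ∀ z p, gameLe m φe μe p z = gameLe m φe μe (pstar z) z → p = pstar z)
    -- the infimum defining `L_r*(z)` is attained at the unique point `q*(z)`,
    -- which satisfies `Σ_{I⊆[m]} q*_I(z) = 1`
    (hq_sum : ∀ z, ∑ I : Finset (Fin m), qstar z I = 1)
    (hq_min : ∀ z q, ∑ I : Finset (Fin m), q I = 1 →
      gameLr m φr μr (qstar z) z ≤ gameLr m φr μr q z)
    (hq_uniq : ∀ z q, ∑ I : Finset (Fin m), q I = 1 →
      gameLr m φr μr q z = gameLr m φr μr (qstar z) z → q = qstar z) :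
    -- proportionate (for this `m`, with these `μ_e, μ_r`) iff `p* = G_m q*`
    (∃ b : ℝ, ∀ z, gameLe m φe μe (pstar z) z = gameLr m φr μr (qstar z) z + b) ↔
    (∀ z (i : Fin m), pstar z i =
      ∑ I : Finset (Fin m), if i ∈ I then qstar z I else 0) :=
  stmt0_general m φe φr hφe_diff hφe_conv μe μr hμe pstar qstar hp_min hp_uniq hq_sum hq_min
end

section
/- Let φ_r : ℝ → ℝ ∪ {+∞} be convex and lower semicontinuous with (0,1) contained in its effective domain, let φ_e : ℝ → ℝ ∪ {+∞} be proper, convex and lower semicontinuous, let μ_e, μ_r > 0, and suppose the symmetrisation φ_s(z) := φ_r(z) + φ_r(1−z) is proper, convex and lower semicontinuous. If φ_e and φ_r (with μ_e, μ_r) are proportionate for m = 1 with constant b, then φ_e(z) = (μ_r/μ_e)·φ_s(z) + b/μ_e for all z ∈ ℝ. -/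
/-!
Writing `q = (1 - t, t)`, proportionality says that `μ_e φ_e` and `μ_r φ_s + b` have the same
transform `z ↦ inf_p (p z + f p)`, i.e. the same Fenchel conjugate up to signs. By Fenchel–Moreau,
a lower semicontinuous convex function that never takes the value `⊥` is determined by its
conjugate: every point strictly below its graph is separated from its closed convex epigraph by a
line, and such a line is either already an affine minorant or vertical, in which case tilting any
one affine minorant along it gives an affine minorant passing above the point.
-/

/-- Convexity for an `ℝ ∪ {+∞}`-valued function on `ℝ`. -/
def ERealConvex (f : ℝ → EReal) : Prop :=
  ∀ x y a b : ℝ, 0 ≤ a → 0 ≤ b → a + b = 1 →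
    f (a * x + b * y) ≤ (a : EReal) * f x + (b : EReal) * f y

namespace EReal

noncomputable def affineOrderIso (c d : ℝ) (hc : 0 < c) : EReal ≃o EReal :=
  ((OrderIso.mulLeft₀ c hc).trans (OrderIso.addRight d)).withTopCongr.withBotCongr

theorem affineOrderIso_apply (c d : ℝ) (hc : 0 < c) (x : EReal) :
    affineOrderIso c d hc x = c * x + d := by
  induction x using EReal.rec with
  | bot => rw [coe_mul_bot_of_pos hc, bot_add]; rfl
  | coe x => rfl
  | top => rw [coe_mul_top_of_pos hc, top_add_coe]; rfl

theorem coe_mul_add_ne_bot {c : ℝ} (hc : 0 < c) (d : ℝ) {x : EReal} (hx : x ≠ ⊥) :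
    (c : EReal) * x + d ≠ ⊥ := by
  rw [← affineOrderIso_apply c d hc, ← (affineOrderIso c d hc).map_bot]
  exact (affineOrderIso c d hc).injective.ne hx

theorem coe_mul_injective {c : ℝ} (hc : 0 < c) :
    Function.Injective fun x : EReal => (c : EReal) * x := by
  simpa [Function.Injective, affineOrderIso_apply] using (affineOrderIso c 0 hc).injective

end EReal

section Affine

variable {f : ℝ → EReal} {c : ℝ}

theorem ERealConvex.const_mul_add (hf : ERealConvex f) (hc : 0 ≤ c) (d : ℝ) :
    ERealConvex fun x => (c : EReal) * f x + d := by
  intro x y a b ha hb hab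
  have hdistrib : ∀ {e : ℝ}, 0 ≤ e → ∀ X Y : EReal, (e : EReal) * (X + Y) = e * X + e * Y :=
    fun he => EReal.left_distrib_of_nonneg_of_ne_top (EReal.coe_nonneg.2 he) (EReal.coe_ne_top _)
  calc (c : EReal) * f (a * x + b * y) + d
      ≤ c * (a * f x + b * f y) + d := by
        gcongr
        exact hf x y a b ha hb hab
    _ = a * (c * f x + d) + b * (c * f y + d) := by
        have hd : ((a * d : ℝ) : EReal) + (b * d : ℝ) = d := by
          rw [← EReal.coe_add, ← add_mul, hab, one_mul]
        rw [hdistrib hc, hdistrib ha, hdistrib hb, mul_left_comm (c : EReal) a,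
          mul_left_comm (c : EReal) b, ← EReal.coe_mul a d, ← EReal.coe_mul b d, ← hd]
        abel

theorem LowerSemicontinuous.const_mul_add (hf : LowerSemicontinuous f) (hc : 0 < c) (d : ℝ) :
    LowerSemicontinuous fun x => (c : EReal) * f x + d := by
  have h := (EReal.affineOrderIso c d hc).continuous.comp_lowerSemicontinuous hf
    (EReal.affineOrderIso c d hc).monotone
  simpa only [Function.comp_def, EReal.affineOrderIso_apply] using h

end Affine

def realEpigraph (f : ℝ → EReal) : Set (ℝ × ℝ) := {q | f q.1 ≤ q.2}

section Epigraph

variable {f : ℝ → EReal}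

theorem ERealConvex.convex_realEpigraph (hf : ERealConvex f) : Convex ℝ (realEpigraph f) := by
  rintro ⟨x, s⟩ hx ⟨y, t⟩ hy a b ha hb hab
  simp only [realEpigraph, Set.mem_ofPred_eq, Prod.smul_mk, Prod.mk_add_mk, smul_eq_mul] at hx hy ⊢
  calc f (a * x + b * y) ≤ a * f x + b * f y := hf x y a b ha hb hab
    _ ≤ a * s + b * t := by gcongr
    _ = ((a * s + b * t : ℝ) : EReal) := by norm_cast

theorem LowerSemicontinuous.isClosed_realEpigraph (hf : LowerSemicontinuous f) :
    IsClosed (realEpigraph f) :=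
  hf.isClosed_epigraph.preimage
    (continuous_fst.prodMk (continuous_coe_real_ereal.comp continuous_snd))

theorem exists_separation_realEpigraph (hconv : ERealConvex f) (hlsc : LowerSemicontinuous f)
    {p₀ r : ℝ} (h : (r : EReal) < f p₀) :
    ∃ α β u : ℝ, (∀ p t : ℝ, f p ≤ t → α * p + β * t < u) ∧ u < α * p₀ + β * r := by
  obtain ⟨L, u, hL, hLp₀⟩ := geometric_hahn_banach_closed_point hconv.convex_realEpigraph
    hlsc.isClosed_realEpigraph (x := (p₀, r)) h.not_ge
  have hL_apply : ∀ p t : ℝ, L (p, t) = L (1, 0) * p + L (0, 1) * t := fun p t => by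
    rw [show ((p, t) : ℝ × ℝ) = p • ((1 : ℝ), (0 : ℝ)) + t • ((0 : ℝ), (1 : ℝ)) by simp,
      map_add, map_smul, map_smul, smul_eq_mul, smul_eq_mul, mul_comm p, mul_comm t]
  exact ⟨L (1, 0), L (0, 1), u, fun p t hpt => hL_apply p t ▸ hL (p, t) hpt, hL_apply p₀ r ▸ hLp₀⟩

end Epigraph

/-- `infConj f z = -f*(-z)`, with `f*` the Fenchel conjugate of `f`. -/
noncomputable def infConj (f : ℝ → EReal) (z : ℝ) : EReal := ⨅ p : ℝ, ((p * z : ℝ) : EReal) + f p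

theorem infConj_le (f : ℝ → EReal) (p z : ℝ) : infConj f z ≤ ((p * z : ℝ) : EReal) + f p :=
  iInf_le _ p

section InfConj

variable {f : ℝ → EReal}

theorem coe_le_infConj_of_separation {α β u : ℝ} (hβ : β < 0)
    (H : ∀ p t : ℝ, f p ≤ t → α * p + β * t < u) : ((u / β : ℝ) : EReal) ≤ infConj f (α / β) := by
  refine le_iInf fun p => ?_
  induction hfp : f p using EReal.rec with
  | bot =>
    have := H p ((u - α * p) / β) (by simp [hfp])
    rw [mul_div_cancel₀ _ hβ.ne] at this
    linarith
  | coe s =>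
    have hrw : p * (α / β) + s = (α * p + β * s) / β := by field_simp [hβ.ne]
    norm_cast
    rw [hrw]
    exact div_le_div_of_nonpos_of_le hβ.le (H p s hfp.le).le
  | top => rw [EReal.coe_add_top]; exact le_top

theorem exists_coe_le_infConj (hconv : ERealConvex f) (hlsc : LowerSemicontinuous f) {x s : ℝ}
    (hx : f x = s) : ∃ z v : ℝ, (v : EReal) ≤ infConj f z := by
  obtain ⟨α, β, u, H, hu⟩ := exists_separation_realEpigraph hconv hlsc
    (show ((s - 1 : ℝ) : EReal) < f x by rw [hx]; exact_mod_cast sub_one_lt s)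
  have hβ : β < 0 := by linarith [H x s hx.le]
  exact ⟨α / β, u / β, coe_le_infConj_of_separation hβ H⟩

theorem coe_sub_le_infConj_sub {z v α u l : ℝ} (hv : (v : EReal) ≤ infConj f z)
    (H : ∀ p t : ℝ, f p ≤ t → α * p < u) (hl : 0 ≤ l) :
    ((v - l * u : ℝ) : EReal) ≤ infConj f (z - l * α) := by
  refine le_iInf fun p => ?_
  have hvp := hv.trans (infConj_le f p z)
  induction hfp : f p using EReal.rec with
  | bot => simp [hfp] at hvp
  | coe s =>
    rw [hfp] at hvp
    norm_cast at hvp ⊢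
    nlinarith [mul_le_mul_of_nonneg_left (H p s hfp.le).le hl]
  | top => rw [EReal.coe_add_top]; exact le_top

theorem exists_coe_lt_infConj (hbot : ∀ p, f p ≠ ⊥) (hconv : ERealConvex f)
    (hlsc : LowerSemicontinuous f) {p₀ r : ℝ} (h : (r : EReal) < f p₀) :
    ∃ z : ℝ, ((r + p₀ * z : ℝ) : EReal) < infConj f z := by
  by_cases htop : ∀ p, f p = ⊤
  · exact ⟨0, by simp [infConj, htop]⟩
  push Not at htop
  obtain ⟨x, hx⟩ := htop
  obtain ⟨s, hs⟩ : ∃ s : ℝ, f x = s := ⟨(f x).toReal, (EReal.coe_toReal hx (hbot x)).symm⟩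
  obtain ⟨z₁, v₁, hv₁⟩ := exists_coe_le_infConj hconv hlsc hs
  obtain ⟨α, β, u, H, hu⟩ := exists_separation_realEpigraph hconv hlsc h
  rcases lt_trichotomy β 0 with hβ | rfl | hβ
  · refine ⟨α / β, lt_of_lt_of_le ?_ (coe_le_infConj_of_separation hβ H)⟩
    have hrw : r + p₀ * (α / β) = (α * p₀ + β * r) / β := by
      field_simp [hβ.ne]; ring
    rw [EReal.coe_lt_coe_iff, hrw]
    exact div_lt_div_of_neg_of_lt hβ hu
  · simp only [zero_mul, add_zero] at H hu
    set d := α * p₀ - u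
    have hd : 0 < d := by linarith
    set l := (|r + p₀ * z₁ - v₁| + 1) / d
    have hl : l * d = |r + p₀ * z₁ - v₁| + 1 := div_mul_cancel₀ _ hd.ne'
    refine ⟨z₁ - l * α, lt_of_lt_of_le ?_ (coe_sub_le_infConj_sub hv₁ H (by positivity))⟩
    rw [EReal.coe_lt_coe_iff]
    nlinarith [le_abs_self (r + p₀ * z₁ - v₁)]
  · set t := max s ((u - α * x) / β)
    have hαt := H x t (by rw [hs]; exact_mod_cast le_max_left _ _)
    linarith [(div_le_iff₀ hβ).1 (le_max_right s ((u - α * x) / β))]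

theorem le_of_infConj_le {g : ℝ → EReal} (hbot : ∀ p, f p ≠ ⊥) (hconv : ERealConvex f)
    (hlsc : LowerSemicontinuous f) (h : ∀ z, infConj f z ≤ infConj g z) : f ≤ g := by
  intro p₀
  by_contra! hlt
  obtain ⟨r, hgr, hrf⟩ := EReal.exists_between_coe_real hlt
  obtain ⟨z, hz⟩ := exists_coe_lt_infConj hbot hconv hlsc hrf
  have : infConj g z ≤ ((r + p₀ * z : ℝ) : EReal) :=
    calc infConj g z ≤ ((p₀ * z : ℝ) : EReal) + g p₀ := infConj_le g p₀ z
      _ ≤ ((p₀ * z : ℝ) : EReal) + r := by gcongr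
      _ = ((r + p₀ * z : ℝ) : EReal) := by norm_cast; ring
  exact (hz.trans_le (h z)).not_ge this

theorem eq_of_infConj_eq {g : ℝ → EReal} (hfbot : ∀ p, f p ≠ ⊥) (hfconv : ERealConvex f)
    (hflsc : LowerSemicontinuous f) (hgbot : ∀ p, g p ≠ ⊥) (hgconv : ERealConvex g)
    (hglsc : LowerSemicontinuous g) (h : infConj f = infConj g) : f = g :=
  le_antisymm (le_of_infConj_le hfbot hfconv hflsc (h ▸ fun _ => le_rfl))
    (le_of_infConj_le hgbot hgconv hglsc (h ▸ fun _ => le_rfl))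

end InfConj

theorem infConj_const_mul_add (f : ℝ → EReal) {c : ℝ} (hc : 0 < c) (d z : ℝ) :
    infConj (fun p => (c : EReal) * f p + d) (c * z) = c * infConj f z + d := by
  unfold infConj
  rw [← EReal.affineOrderIso_apply c d hc, OrderIso.map_iInf]
  refine iInf_congr fun p => ?_
  rw [EReal.affineOrderIso_apply, EReal.left_distrib_of_nonneg_of_ne_top
    (EReal.coe_nonneg.2 hc.le) (EReal.coe_ne_top c), ← EReal.coe_mul, add_assoc, mul_left_comm]

theorem infConj_const_mul (f : ℝ → EReal) {c : ℝ} (hc : 0 < c) (z : ℝ) :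
    infConj (fun p => (c : EReal) * f p) (c * z) = c * infConj f z := by
  simpa using infConj_const_mul_add f hc 0 z

theorem infConj_add_const (f : ℝ → EReal) (d z : ℝ) :
    infConj (fun p => f p + d) z = infConj f z + d := by
  simpa using infConj_const_mul_add f one_pos d z

theorem iInf_subtype_add_eq_one {α : Type*} [CompleteLattice α] (F : ℝ × ℝ → α) :
    ⨅ q : {q : ℝ × ℝ // q.1 + q.2 = 1}, F q.1 = ⨅ t : ℝ, F (1 - t, t) := by
  have hsurj : Function.Surjective
      fun t : ℝ => (⟨(1 - t, t), sub_add_cancel 1 t⟩ : {q : ℝ × ℝ // q.1 + q.2 = 1}) :=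
    fun ⟨(a, b), hab⟩ => ⟨b, by simp [← hab]⟩
  exact (hsurj.iInf_comp fun q => F q.1).symm

/-- For `m = 1` we write `q = (q_∅, q_{1})` as a pair, so that
`L_r(q, z) = q_{1} z + μ_r (φ_r(q_∅) + φ_r(q_{1}))`. -/
theorem stmt3_general (φe φr : ℝ → EReal)
    (hφe_ne_bot : ∀ z, φe z ≠ ⊥)
    (hφe_conv : ERealConvex φe) (hφe_lsc : LowerSemicontinuous φe)
    (φs : ℝ → EReal) (hφs : ∀ z, φs z = φr z + φr (1 - z))
    (hφs_ne_bot : ∀ z, φs z ≠ ⊥)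
    (hφs_conv : ERealConvex φs) (hφs_lsc : LowerSemicontinuous φs)
    (μe μr : ℝ) (hμe : 0 < μe) (hμr : 0 < μr) (b : ℝ)
    -- proportionate for `m = 1` with constant `b`
    (hprop : ∀ z : ℝ,
      (⨅ p : ℝ, (((p * z : ℝ)) : EReal) + (μe : EReal) * φe p) =
      (⨅ q : {q : ℝ × ℝ // q.1 + q.2 = 1},
        (((q.1.2 * z : ℝ)) : EReal) + (μr : EReal) * (φr q.1.1 + φr q.1.2)) +
        (b : EReal)) :
    ∀ z : ℝ, φe z = ((μr / μe : ℝ) : EReal) * φs z + ((b / μe : ℝ) : EReal) := by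
  have hc : 0 < μr / μe := div_pos hμr hμe
  set ψ : ℝ → EReal := fun z => ((μr / μe : ℝ) : EReal) * φs z + ((b / μe : ℝ) : EReal)
  have hμeψ : (fun t => (μe : EReal) * ψ t) = fun t => (μr : EReal) * φs t + b := funext fun t => by
    rw [EReal.left_distrib_of_nonneg_of_ne_top (EReal.coe_nonneg.2 hμe.le) (EReal.coe_ne_top _),
      ← mul_assoc, ← EReal.coe_mul, ← EReal.coe_mul, mul_div_cancel₀ _ hμe.ne',
      mul_div_cancel₀ _ hμe.ne']
  have hreparam : ∀ z, (⨅ q : {q : ℝ × ℝ // q.1 + q.2 = 1},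
      ((q.1.2 * z : ℝ) : EReal) + μr * (φr q.1.1 + φr q.1.2)) = infConj (fun t => μr * φs t) z :=
    fun z => (iInf_subtype_add_eq_one
      fun q : ℝ × ℝ => ((q.2 * z : ℝ) : EReal) + μr * (φr q.1 + φr q.2)).trans
        (iInf_congr fun t => by dsimp only; rw [hφs, add_comm (φr t)])
  suffices infConj φe = infConj ψ from congrFun (eq_of_infConj_eq hφe_ne_bot hφe_conv hφe_lsc
    (fun t => EReal.coe_mul_add_ne_bot hc _ (hφs_ne_bot t)) (hφs_conv.const_mul_add hc.le _)
    (hφs_lsc.const_mul_add hc _) this)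
  funext w
  apply EReal.coe_mul_injective hμe
  calc (μe : EReal) * infConj φe w = infConj (fun p => μe * φe p) (μe * w) :=
        (infConj_const_mul φe hμe w).symm
    _ = infConj (fun t => μr * φs t + b) (μe * w) := by
        rw [infConj_add_const, ← hreparam]; exact hprop (μe * w)
    _ = μe * infConj ψ w := by rw [← hμeψ, infConj_const_mul ψ hμe w]

/-- Lemma 2: if `φ_e` and `φ_r` (with parameters `μ_e, μ_r`) are proportionate
for `m = 1` with constant `b`, then `φ_e = (μ_r/μ_e)·φ_s + b/μ_e`, where
`φ_s(z) = φ_r(z) + φ_r(1−z)` is the symmetrisation of `φ_r`.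

For `m = 1` the two game values are `L_e(p, z) = p z + μ_e φ_e(p)` over `p ∈ ℝ`
and `L_r(q, z) = q_{{1}} z + μ_r (φ_r(q_∅) + φ_r(q_{{1}}))` over
`q = (q_∅, q_{{1}})` with `q_∅ + q_{{1}} = 1`. -/
theorem stmt3 (φe φr : ℝ → EReal)
    (hφr_ne_bot : ∀ z, φr z ≠ ⊥)
    (hφr_conv : ERealConvex φr) (hφr_lsc : LowerSemicontinuous φr)
    (hφr_dom : ∀ z ∈ Set.Ioo (0 : ℝ) 1, φr z ≠ ⊤)
    (hφe_ne_bot : ∀ z, φe z ≠ ⊥) (hφe_proper : ∃ z, φe z ≠ ⊤)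
    (hφe_conv : ERealConvex φe) (hφe_lsc : LowerSemicontinuous φe)
    (φs : ℝ → EReal) (hφs : ∀ z, φs z = φr z + φr (1 - z))
    (hφs_ne_bot : ∀ z, φs z ≠ ⊥) (hφs_proper : ∃ z, φs z ≠ ⊤)
    (hφs_conv : ERealConvex φs) (hφs_lsc : LowerSemicontinuous φs)
    (μe μr : ℝ) (hμe : 0 < μe) (hμr : 0 < μr) (b : ℝ)
    -- proportionate for `m = 1` with constant `b`
    (hprop : ∀ z : ℝ,
      (⨅ p : ℝ, (((p * z : ℝ)) : EReal) + (μe : EReal) * φe p) =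
      (⨅ q : {q : ℝ × ℝ // q.1 + q.2 = 1},
        (((q.1.2 * z : ℝ)) : EReal) + (μr : EReal) * (φr q.1.1 + φr q.1.2)) +
        (b : EReal)) :
    ∀ z : ℝ, φe z = ((μr / μe : ℝ) : EReal) * φs z + ((b / μe : ℝ) : EReal) :=
  stmt3_general φe φr hφe_ne_bot hφe_conv hφe_lsc φs hφs hφs_ne_bot hφs_conv hφs_lsc μe μr hμe hμr b
    hprop
end

section
/- Fix μ > 0 and an integer m ≥ 1. Then there exists b ∈ ℝ, not depending on z, such that for all z ∈ ℝ^m: inf over p ∈ (0,1)^m of [ Σ_{i∈[m]} p_i z_i + μ Σ_{i∈[m]} ( p_i log p_i + (1−p_i) log(1−p_i) − 1 ) ] equals b plus inf over q with q_I > 0 for all I ⊆ [m] and Σ_{I⊆[m]} q_I = 1 of [ Σ_{I⊆[m]} q_I Σ_{i∈I} z_i + μ Σ_{I⊆[m]} ( q_I log q_I − q_I ) ]. In other words, the generator φ_r(z) = z log z − z is proportionate (with μ_e = μ_r = μ) to its symmetrisation φ_e(z) = z log z + (1−z) log(1−z) − 1. -/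
/-!
By the Gibbs variational principle, the minimum of `∑ q s + μ ∑ (q log q - q)` over positive
probability vectors `q` is `-μ log ∑ exp (-s / μ) - μ`, attained at the Gibbs distribution.
Since `φ_e(p) = φ_r(p) + φ_r(1 - p)`, the left-hand problem splits into `m` independent Gibbs
problems on two points, with values `-μ log (1 + exp (-z_i / μ)) - μ`. The partition function
over subsets factorises, `∑_I ∏_{i ∈ I} exp (-z_i / μ) = ∏_i (1 + exp (-z_i / μ))`, so the two
optimal values differ by the constant `μ - μ m`.
-/

open Real Finset

lemma Real.sub_le_mul_log_sub_log {x y : ℝ} (hx : 0 < x) (hy : 0 < y) :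
    x - y ≤ x * (log x - log y) := by
  have h := log_le_sub_one_of_pos (div_pos hy hx)
  rw [log_div hy.ne' hx.ne'] at h
  have := mul_le_mul_of_nonneg_left h hx.le
  rw [mul_sub_one, mul_div_cancel₀ _ hx.ne'] at this
  linarith

lemma Real.sum_mul_log_sub_log_nonneg {ι : Type*} [Fintype ι] {q g : ι → ℝ}
    (hq : ∀ i, 0 < q i) (hg : ∀ i, 0 < g i) (hsum : ∑ i, q i = ∑ i, g i) :
    0 ≤ ∑ i, q i * (log (q i) - log (g i)) := by
  calc (0 : ℝ) = ∑ i, (q i - g i) := by rw [sum_sub_distrib, hsum, sub_self]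
    _ ≤ _ := sum_le_sum fun i _ => sub_le_mul_log_sub_log (hq i) (hg i)

theorem IsLeast.ciInf_subtype_eq {α β : Type*} [ConditionallyCompleteLattice β]
    {s : Set α} {f : α → β} {c : β} (h : IsLeast (f '' s) c) : ⨅ a : s, f a = c := by
  rw [iInf, ← Set.image_eq_range]
  exact h.csInf_eq

theorem isLeast_image_pi_sum {ι : Type*} [Fintype ι] {f : ι → ℝ → ℝ} {s : Set ℝ}
    {c : ι → ℝ} (h : ∀ i, IsLeast (f i '' s) (c i)) :
    IsLeast ((fun p : ι → ℝ => ∑ i, f i (p i)) '' {p | ∀ i, p i ∈ s}) (∑ i, c i) := by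
  choose x hxs hxc using fun i => (h i).1
  refine ⟨⟨x, hxs, by simp only [hxc]⟩, ?_⟩
  rintro _ ⟨p, hp, rfl⟩
  exact sum_le_sum fun i _ => (h i).2 ⟨p i, hp i, rfl⟩

section FreeEnergy

variable {ι : Type*} [Fintype ι]

noncomputable def freeEnergy (μ : ℝ) (s q : ι → ℝ) : ℝ :=
  ∑ i, q i * s i + μ * ∑ i, (q i * log (q i) - q i)

noncomputable def gibbs (μ : ℝ) (s : ι → ℝ) (i : ι) : ℝ :=
  exp (-(s i / μ)) / ∑ j, exp (-(s j / μ))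

variable [Nonempty ι] (μ : ℝ) (s : ι → ℝ)

lemma sum_exp_pos : 0 < ∑ j, exp (-(s j / μ)) :=
  sum_pos (fun _ _ => exp_pos _) univ_nonempty

lemma gibbs_pos (i : ι) : 0 < gibbs μ s i :=
  div_pos (exp_pos _) (sum_exp_pos μ s)

lemma sum_gibbs : ∑ i, gibbs μ s i = 1 := by
  simp only [gibbs]
  rw [← sum_div, div_self (sum_exp_pos μ s).ne']

lemma log_gibbs (i : ι) : log (gibbs μ s i) = -(s i / μ) - log (∑ j, exp (-(s j / μ))) := by
  rw [gibbs, log_div (exp_pos _).ne' (sum_exp_pos μ s).ne', log_exp]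

lemma freeEnergy_eq {μ : ℝ} (hμ : μ ≠ 0) (s : ι → ℝ) {q : ι → ℝ} (hq : ∑ i, q i = 1) :
    freeEnergy μ s q = μ * ∑ i, q i * (log (q i) - log (gibbs μ s i)) -
      μ * log (∑ j, exp (-(s j / μ))) - μ := by
  simp only [freeEnergy, log_gibbs, sum_sub_distrib, mul_sub, ← sum_mul, hq, mul_neg,
    sum_neg_distrib, mul_div_assoc', ← sum_div]
  field_simp
  ring

theorem isLeast_freeEnergy {μ : ℝ} (hμ : 0 < μ) (s : ι → ℝ) :
    IsLeast (freeEnergy μ s '' {q | (∀ i, 0 < q i) ∧ ∑ i, q i = 1})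
      (-(μ * log (∑ j, exp (-(s j / μ)))) - μ) := by
  refine ⟨⟨gibbs μ s, ⟨gibbs_pos μ s, sum_gibbs μ s⟩, ?_⟩, ?_⟩
  · simp [freeEnergy_eq hμ.ne' s (sum_gibbs μ s)]
  · rintro _ ⟨q, ⟨hq, hsum⟩, rfl⟩
    rw [freeEnergy_eq hμ.ne' s hsum]
    have := sum_mul_log_sub_log_nonneg hq (gibbs_pos μ s) (by rw [hsum, sum_gibbs])
    nlinarith

end FreeEnergy

lemma simplex_fin_two :
    {q : Fin 2 → ℝ | (∀ i, 0 < q i) ∧ ∑ i, q i = 1} = (fun p => ![p, 1 - p]) '' Set.Ioo 0 1 := by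
  ext q
  simp only [Set.mem_ofPred_eq, Set.mem_image, Set.mem_Ioo, Fin.forall_fin_two, Fin.sum_univ_two]
  constructor
  · rintro ⟨⟨h0, h1⟩, hsum⟩
    exact ⟨q 0, ⟨h0, by linarith⟩, by ext i; fin_cases i <;> simp [← hsum]⟩
  · rintro ⟨p, ⟨hp0, hp1⟩, rfl⟩
    simp [hp0, hp1]

lemma freeEnergy_fin_two (μ z p : ℝ) :
    freeEnergy μ ![z, 0] ![p, 1 - p] = p * z + μ * (p * log p + (1 - p) * log (1 - p) - 1) := by
  simp only [freeEnergy, Fin.sum_univ_two, Matrix.cons_val_zero, Matrix.cons_val_one,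
    Matrix.cons_val_fin_one, mul_zero, add_zero]
  ring

theorem isLeast_binaryFreeEnergy {μ : ℝ} (hμ : 0 < μ) (z : ℝ) :
    IsLeast ((fun p => p * z + μ * (p * log p + (1 - p) * log (1 - p) - 1)) '' Set.Ioo 0 1)
      (-(μ * log (1 + exp (-(z / μ)))) - μ) := by
  have h := isLeast_freeEnergy hμ ![z, 0]
  rw [simplex_fin_two, Set.image_image] at h
  simpa [freeEnergy_fin_two, add_comm] using h

lemma sum_exp_sum_eq_prod (μ : ℝ) {m : ℕ} (z : Fin m → ℝ) :
    ∑ I : Finset (Fin m), exp (-((∑ i ∈ I, z i) / μ)) = ∏ i, (1 + exp (-(z i / μ))) := by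
  rw [prod_one_add, powerset_univ]
  refine sum_congr rfl fun I _ => ?_
  rw [← exp_sum, sum_div, sum_neg_distrib]

theorem stmt4_general (m : ℕ) (μ : ℝ) (hμ : 0 < μ) :
    ∃ b : ℝ, ∀ z : Fin m → ℝ,
      (⨅ p : {p : Fin m → ℝ // ∀ i, 0 < p i ∧ p i < 1},
        (∑ i, p.1 i * z i +
          μ * ∑ i, (p.1 i * Real.log (p.1 i) +
            (1 - p.1 i) * Real.log (1 - p.1 i) - 1))) =
      b + ⨅ q : {q : Finset (Fin m) → ℝ //
          (∀ I, 0 < q I) ∧ ∑ I : Finset (Fin m), q I = 1},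
        (∑ I : Finset (Fin m), q.1 I * ∑ i ∈ I, z i +
          μ * ∑ I : Finset (Fin m), (q.1 I * Real.log (q.1 I) - q.1 I)) := by
  refine ⟨μ - μ * m, fun z => ?_⟩
  have hp := isLeast_image_pi_sum fun i => isLeast_binaryFreeEnergy hμ (z i)
  have hq := isLeast_freeEnergy hμ fun I : Finset (Fin m) => ∑ i ∈ I, z i
  simp only [sum_add_distrib, ← mul_sum] at hp
  calc _ = ∑ i, (-(μ * log (1 + exp (-(z i / μ)))) - μ) := hp.ciInf_subtype_eq
    _ = μ - μ * m + (-(μ * log (∑ I : Finset (Fin m), exp (-((∑ i ∈ I, z i) / μ)))) - μ) := by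
      rw [sum_exp_sum_eq_prod, log_prod fun i _ => by positivity]
      simp only [sum_sub_distrib, sum_neg_distrib, sum_const, card_univ, Fintype.card_fin,
        nsmul_eq_mul, mul_sum]
      ring
    _ = _ := congrArg _ hq.ciInf_subtype_eq.symm

/-- Lemma 3: the generator `φ_r(z) = z log z − z` is proportionate (with
`μ_e = μ_r = μ`) to its symmetrisation
`φ_e(z) = z log z + (1−z) log(1−z) − 1`: there is a constant `b`, not
depending on `z`, relating the two optimal game values. -/
theorem stmt4 (m : ℕ) (hm : 1 ≤ m) (μ : ℝ) (hμ : 0 < μ) :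
    ∃ b : ℝ, ∀ z : Fin m → ℝ,
      (⨅ p : {p : Fin m → ℝ // ∀ i, 0 < p i ∧ p i < 1},
        (∑ i, p.1 i * z i +
          μ * ∑ i, (p.1 i * Real.log (p.1 i) +
            (1 - p.1 i) * Real.log (1 - p.1 i) - 1))) =
      b + ⨅ q : {q : Finset (Fin m) → ℝ //
          (∀ I, 0 < q I) ∧ ∑ I : Finset (Fin m), q I = 1},
        (∑ I : Finset (Fin m), q.1 I * ∑ i ∈ I, z i +
          μ * ∑ I : Finset (Fin m), (q.1 I * Real.log (q.1 I) - q.1 I)) :=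
  stmt4_general m μ hμ
end

section
/- Fix μ_r > 0 and an integer m ≥ 1, and set μ_e = μ_r / 2^{m−1}. Then there exists b ∈ ℝ, not depending on z, such that for all z ∈ ℝ^m: inf over p ∈ ℝ^m of [ Σ_{i∈[m]} p_i z_i + μ_e Σ_{i∈[m]} (1/2)(1 − 2 p_i (1 − p_i)) ] equals b plus inf over q ∈ ℝ^{2^m} with Σ_{I⊆[m]} q_I = 1 of [ Σ_{I⊆[m]} q_I Σ_{i∈I} z_i + μ_r Σ_{I⊆[m]} (1/2) q_I² ]. In other words, the generator φ_r(z) = z²/2 is proportionate (with μ_e = μ_r/2^{m−1}) to its symmetrisation φ_e(z) = (1/2)(1 − 2z(1 − z)). -/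
/-!
Both infima are minima of strictly convex quadratics, found by completing the square. The
separable problem on the left is minimised coordinatewise, at `p i = (μ_e - z i) / (2 μ_e)`;
the problem on the right is minimised over the hyperplane `∑ q = 1` at
`q I = (λ - ∑_{i ∈ I} z i) / μ_r`, with `λ` the Lagrange multiplier. Both optimal values are
explicit quadratics in `z`, which enter only through `∑ z i` and `∑ z i ^ 2`: on the right
via the subset sums `∑_I ∑_{i ∈ I} z i = 2^(m-1) ∑ z i` and
`∑_I (∑_{i ∈ I} z i)^2 = 2^(m-2) (∑ z i^2 + (∑ z i)^2)`.
The choice `μ_e = μ_r / 2^(m-1)` makes the coefficients of these agree, so the two values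
differ by a constant.
-/

open Finset

theorem ciInf_eq_of_forall_ge_of_eq {ι α : Type*} [ConditionallyCompleteLattice α]
    {f : ι → α} {a : α} (h : ∀ i, a ≤ f i) (i₀ : ι) (h₀ : f i₀ = a) :
    ⨅ i, f i = a :=
  IsLeast.csInf_eq ⟨⟨i₀, h₀⟩, Set.forall_mem_range.2 h⟩

section SubsetSums

variable {α R : Type*} [DecidableEq α] [CommRing R] (f : α → R)

theorem Finset.sum_insert_of_mem_powerset {s I : Finset α} {a : α} (ha : a ∉ s)
    (hI : I ∈ s.powerset) : ∑ i ∈ insert a I, f i = f a + ∑ i ∈ I, f i :=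
  sum_insert fun h => ha (mem_powerset.1 hI h)

theorem Finset.two_mul_sum_powerset_sum (s : Finset α) :
    2 * ∑ I ∈ s.powerset, ∑ i ∈ I, f i = 2 ^ #s * ∑ i ∈ s, f i := by
  induction s using Finset.induction with
  | empty => simp
  | @insert a s ha ih =>
    rw [sum_powerset_insert ha, sum_congr rfl fun I => sum_insert_of_mem_powerset f ha,
      sum_add_distrib, sum_const, card_powerset, nsmul_eq_mul, sum_insert ha,
      card_insert_of_notMem ha]
    push_cast
    linear_combination 2 * ih

theorem Finset.four_mul_sum_powerset_sq_sum (s : Finset α) :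
    4 * ∑ I ∈ s.powerset, (∑ i ∈ I, f i) ^ 2 =
      2 ^ #s * (∑ i ∈ s, f i ^ 2 + (∑ i ∈ s, f i) ^ 2) := by
  induction s using Finset.induction with
  | empty => simp
  | @insert a s ha ih =>
    have hins : ∀ I ∈ s.powerset, (∑ i ∈ insert a I, f i) ^ 2 =
        f a ^ 2 + 2 * f a * ∑ i ∈ I, f i + (∑ i ∈ I, f i) ^ 2 := fun I hI => by
      rw [sum_insert_of_mem_powerset f ha hI, add_sq]
    rw [sum_powerset_insert ha, sum_congr rfl hins, sum_add_distrib, sum_add_distrib, sum_const,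
      card_powerset, nsmul_eq_mul, ← mul_sum,
      sum_insert ha, sum_insert ha, card_insert_of_notMem ha]
    push_cast
    linear_combination 2 * ih + 4 * f a * two_mul_sum_powerset_sum f s

end SubsetSums

theorem iInf_sum_mul_add_symmetrised_sq {ι : Type*} [Fintype ι] {μ : ℝ} (hμ : 0 < μ)
    (z : ι → ℝ) :
    ⨅ p : ι → ℝ, (∑ i, p i * z i + μ * ∑ i, (1 / 2 : ℝ) * (1 - 2 * p i * (1 - p i))) =
      ∑ i, (μ / 4 + z i / 2 - z i ^ 2 / (4 * μ)) := by
  have hsq : ∀ p : ι → ℝ,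
      ∑ i, p i * z i + μ * ∑ i, (1 / 2 : ℝ) * (1 - 2 * p i * (1 - p i)) =
        ∑ i, (μ / 4 + z i / 2 - z i ^ 2 / (4 * μ)) +
          ∑ i, μ * (p i - (μ - z i) / (2 * μ)) ^ 2 := by
    intro p
    rw [mul_sum, ← sum_add_distrib, ← sum_add_distrib]
    refine sum_congr rfl fun i _ => ?_
    field_simp
    ring
  refine ciInf_eq_of_forall_ge_of_eq (fun p => ?_) (fun i => (μ - z i) / (2 * μ)) ?_
  · rw [hsq]
    have : 0 ≤ ∑ i, μ * (p i - (μ - z i) / (2 * μ)) ^ 2 := by positivity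
    linarith
  · rw [hsq]
    simp

theorem iInf_sum_mul_add_sq_of_sum_eq_one {J : Type*} [Fintype J] [Nonempty J] {μ : ℝ}
    (hμ : 0 < μ) (a : J → ℝ) :
    ⨅ q : {q : J → ℝ // ∑ j, q j = 1},
        (∑ j, q.1 j * a j + μ * ∑ j, (1 / 2 : ℝ) * q.1 j ^ 2) =
      (μ + ∑ j, a j) ^ 2 / (2 * Fintype.card J * μ) - (∑ j, a j ^ 2) / (2 * μ) := by
  set n : ℝ := (Fintype.card J : ℝ)
  have hn : 0 < n := by positivity
  set lam := (μ + ∑ j, a j) / n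
  set qmin : J → ℝ := fun j => (lam - a j) / μ
  have hqmin : ∑ j, qmin j = 1 := by
    simp only [qmin, ← sum_div, sum_sub_distrib, sum_const, card_univ, nsmul_eq_mul, lam]
    field_simp
    ring
  have hsq : ∀ q : J → ℝ, ∑ j, q j = 1 →
      ∑ j, q j * a j + μ * ∑ j, (1 / 2 : ℝ) * q j ^ 2 =
        (lam - μ / 2 * ∑ j, qmin j ^ 2) + ∑ j, μ / 2 * (q j - qmin j) ^ 2 := by
    intro q hq
    have hterm : ∀ j, q j * a j + μ * ((1 / 2 : ℝ) * q j ^ 2) =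
        μ / 2 * (q j - qmin j) ^ 2 + (lam * q j - μ / 2 * qmin j ^ 2) := by
      intro j
      simp only [qmin]
      field_simp
      ring
    rw [mul_sum, ← sum_add_distrib, sum_congr rfl fun j _ => hterm j, sum_add_distrib,
      sum_sub_distrib]
    simp only [← mul_sum, hq]
    ring
  have hval : lam - μ / 2 * ∑ j, qmin j ^ 2 =
      (μ + ∑ j, a j) ^ 2 / (2 * n * μ) - (∑ j, a j ^ 2) / (2 * μ) := by
    simp only [qmin, div_pow, ← sum_div, sub_sq, sum_add_distrib, sum_sub_distrib, sum_const,
      card_univ, nsmul_eq_mul, ← mul_sum, lam]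
    field_simp
    ring
  refine ciInf_eq_of_forall_ge_of_eq (fun q => ?_) ⟨qmin, hqmin⟩ ?_
  · rw [hsq q.1 q.2]
    have : 0 ≤ ∑ j, μ / 2 * (q.1 j - qmin j) ^ 2 := by positivity
    linarith
  · rw [hsq qmin hqmin, hval]
    simp

/-- Lemma 4: the generator `φ_r(z) = z²/2` is proportionate, with
`μ_e = μ_r / 2^{m−1}`, to its symmetrisation `φ_e(z) = (1/2)(1 − 2z(1−z))`:
there is a constant `b`, not depending on `z`, relating the two optimal game
values. -/
theorem stmt7 (m : ℕ) (hm : 1 ≤ m) (μr : ℝ) (hμr : 0 < μr) :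
    ∃ b : ℝ, ∀ z : Fin m → ℝ,
      (⨅ p : Fin m → ℝ,
        (∑ i, p i * z i +
          (μr / 2 ^ (m - 1)) * ∑ i, (1 / 2 : ℝ) * (1 - 2 * p i * (1 - p i)))) =
      b + ⨅ q : {q : Finset (Fin m) → ℝ // ∑ I : Finset (Fin m), q I = 1},
        (∑ I : Finset (Fin m), q.1 I * ∑ i ∈ I, z i +
          μr * ∑ I : Finset (Fin m), (1 / 2 : ℝ) * q.1 I ^ 2) := by
  set c : ℝ := 2 ^ (m - 1)
  have hc : 0 < c := by positivity
  have hpow : (2 : ℝ) ^ m = 2 * c := by rw [← pow_succ', Nat.sub_add_cancel hm]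
  refine ⟨((m : ℝ) - 1) * μr / (4 * c), fun z => ?_⟩
  have hS1 : ∑ I : Finset (Fin m), ∑ i ∈ I, z i = c * ∑ i, z i := by
    have h := two_mul_sum_powerset_sum z univ
    rw [powerset_univ, card_univ, Fintype.card_fin, hpow] at h
    linarith
  have hS2 : ∑ I : Finset (Fin m), (∑ i ∈ I, z i) ^ 2 =
      c / 2 * (∑ i, z i ^ 2 + (∑ i, z i) ^ 2) := by
    have h := four_mul_sum_powerset_sq_sum z univ
    rw [powerset_univ, card_univ, Fintype.card_fin, hpow] at h
    linarith
  rw [iInf_sum_mul_add_symmetrised_sq (by positivity),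
    iInf_sum_mul_add_sq_of_sum_eq_one hμr, Fintype.card_finset, Fintype.card_fin, hS1, hS2]
  simp only [sum_add_distrib, sum_sub_distrib, ← sum_div, sum_const, card_univ,
    Fintype.card_fin, nsmul_eq_mul]
  push_cast
  rw [hpow]
  field_simp
  ring
end

section
/- Let m ≥ 1, d ≥ 1, and let (x_i, y_i) ∈ ℝ^d × {−1,1} for i ∈ [m] be examples with edge vectors e_i = y_i · x_i, and rademacher observations π_I = Σ_{i∈I} e_i for I ⊆ [m]. Let φ_e, φ_r : ℝ → ℝ ∪ {+∞} be generators with parameters μ_e, μ_r > 0 that are proportionate for m with constant b, and suppose there exist a_e > 0 and b_e ∈ ℝ and a function ℓ_e : ℝ^m → ℝ such that −L_e*(z) = a_e ℓ_e(z) + b_e for all z ∈ ℝ^m (f_e is linear). Let Ω : ℝ^d → ℝ be any regularizer with Ω(0) = 0, and set Ω̃(θ) = a_e Ω(θ)/‖θ‖₂² for θ ≠ 0 and Ω̃(0) = 0. Then for every θ ∈ ℝ^d, writing z(θ) ∈ ℝ^m for the vector with coordinates z(θ)_i = θ·e_i: a_e ( ℓ_e(z(θ)) + Ω(θ) ) +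 b_e = − inf { Σ_{I⊆[m]} q_I θ·( π_I − Ω̃(θ)·θ ) + μ_r Σ_{I⊆[m]} φ_r(q_I) : q ∈ ℝ^{2^m}, Σ_{I⊆[m]} q_I = 1 } − b. That is, the Ω-regularized example loss is equivalent to the rado loss computed over the regularized rados { π_I − Ω̃(θ)·θ : I ⊆ [m] }. -/
/-- `L_e*(z) = inf_{p ∈ ℝ^m} ( Σ_i p_i z_i + μ_e Σ_i φ_e(p_i) )`, with generator
taking values in `ℝ ∪ {+∞}` (encoded as `EReal`). -/
noncomputable def LeStar (m : ℕ) (φe : ℝ → EReal) (μe : ℝ) (z : Fin m → ℝ) : EReal :=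
  ⨅ p : Fin m → ℝ,
    (((∑ i, p i * z i : ℝ) : EReal) + (μe : EReal) * ∑ i, φe (p i))

/-- `L_r*(z) = inf { Σ_I q_I Σ_{i∈I} z_i + μ_r Σ_I φ_r(q_I) : Σ_I q_I = 1 }`. -/
noncomputable def LrStar (m : ℕ) (φr : ℝ → EReal) (μr : ℝ) (z : Fin m → ℝ) : EReal :=
  ⨅ q : {q : Finset (Fin m) → ℝ // ∑ I : Finset (Fin m), q I = 1},
    (((∑ I : Finset (Fin m), q.1 I * ∑ i ∈ I, z i : ℝ) : EReal) +
      (μr : EReal) * ∑ I : Finset (Fin m), φr (q.1 I))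

/-! Since `∑_I q_I = 1`, shifting every rado score `θ·π_I` by a constant `c` shifts the infimum
defining `L_r*` by `c`; by the choice of `Ω̃`, the regularized rados shift the score by exactly
`θ·(Ω̃(θ) θ) = a_e Ω(θ)`. So the infimum is `L_r*(z(θ)) − a_e Ω(θ)`, and proportionality together
with the linearity of `f_e` gives `L_r*(z(θ)) = −(a_e ℓ_e(z(θ)) + b_e) − b`. -/

open Finset

theorem EReal.iInf_add_coe {ι : Sort*} (g : ι → EReal) (c : ℝ) :
    ⨅ i, (g i + c) = (⨅ i, g i) + c := by
  have hcont : ContinuousAt (· + (c : EReal)) (⨅ i, g i) :=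
    (EReal.continuousAt_add (.inr (EReal.coe_ne_bot c)) (.inr (EReal.coe_ne_top c))).comp
      (Continuous.prodMk_left _).continuousAt
  exact ((monotone_id.add_const _).map_iInf_of_continuousAt hcont (EReal.top_add_coe c)).symm

noncomputable def simplexInf {σ : Type*} [Fintype σ] (φ : ℝ → EReal) (μ : ℝ) (s : σ → ℝ) :
    EReal :=
  ⨅ q : {q : σ → ℝ // ∑ j, q j = 1}, (((∑ j, q.1 j * s j : ℝ) : EReal) + μ * ∑ j, φ (q.1 j))

theorem LrStar_eq_simplexInf (m : ℕ) (φ : ℝ → EReal) (μ : ℝ) (z : Fin m → ℝ) :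
    LrStar m φ μ z = simplexInf φ μ (fun I => ∑ i ∈ I, z i) :=
  rfl

theorem simplexInf_sub_const {σ : Type*} [Fintype σ] (φ : ℝ → EReal) (μ : ℝ) (s : σ → ℝ)
    (c : ℝ) : simplexInf φ μ (fun j => s j - c) = simplexInf φ μ s - c := by
  rw [simplexInf, simplexInf, sub_eq_add_neg, ← EReal.coe_neg, ← EReal.iInf_add_coe]
  congr 1 with q
  have hshift : ∑ j, q.1 j * (s j - c) = ∑ j, q.1 j * s j - c := by
    simp only [mul_sub, sum_sub_distrib, ← sum_mul, q.2, one_mul]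
  rw [hshift, sub_eq_add_neg, EReal.coe_add, add_right_comm]

theorem rescaled_mul_sum_sq {κ : Type*} [Fintype κ] {Ω Ωt : (κ → ℝ) → ℝ} {a : ℝ}
    (hΩ0 : Ω 0 = 0) (hΩt : ∀ θ, θ ≠ 0 → Ωt θ = a * Ω θ / ∑ k, θ k ^ 2) (hΩt0 : Ωt 0 = 0)
    (θ : κ → ℝ) : Ωt θ * ∑ k, θ k ^ 2 = a * Ω θ := by
  rcases eq_or_ne θ 0 with rfl | hθ
  · simp [hΩ0, hΩt0]
  · have hpos : 0 < ∑ k, θ k ^ 2 := by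
      obtain ⟨k, hk : θ k ≠ 0⟩ := Function.ne_iff.mp hθ
      exact sum_pos' (fun j _ => sq_nonneg _) ⟨k, mem_univ k, by positivity⟩
    rw [hΩt θ hθ, div_mul_cancel₀ _ hpos.ne']

theorem sum_mul_sum_sub_mul_self {ι κ : Type*} [Fintype κ] (θ : κ → ℝ) (e : ι → κ → ℝ)
    (I : Finset ι) (t : ℝ) :
    ∑ k, θ k * ((∑ i ∈ I, e i) k - t * θ k) = ∑ i ∈ I, ∑ k, θ k * e i k - t * ∑ k, θ k ^ 2 := by
  simp only [mul_sub, sum_sub_distrib, Finset.sum_apply, mul_sum]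
  rw [sum_comm]
  congr 1
  exact sum_congr rfl fun k _ => by ring

theorem stmt11_general (m d : ℕ)
    (e : Fin m → Fin d → ℝ)
    (π : Finset (Fin m) → Fin d → ℝ) (hπ : ∀ I, π I = ∑ i ∈ I, e i)
    (φe φr : ℝ → EReal)
    (μe μr : ℝ) (b : ℝ)
    -- proportionate, with constant `b`
    (hprop : ∀ z : Fin m → ℝ, LeStar m φe μe z = LrStar m φr μr z + (b : EReal))
    -- `f_e` is linear: `−L_e*(z) = a_e·ℓ_e(z) + b_e`
    (ae be : ℝ) (ℓe : (Fin m → ℝ) → ℝ)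
    (hlin : ∀ z : Fin m → ℝ, -LeStar m φe μe z = ((ae * ℓe z + be : ℝ) : EReal))
    -- the regularizer and the rescaled regularizer `Ω̃`
    (Ω : (Fin d → ℝ) → ℝ) (hΩ0 : Ω 0 = 0)
    (Ωt : (Fin d → ℝ) → ℝ)
    (hΩt : ∀ θ : Fin d → ℝ, θ ≠ 0 → Ωt θ = ae * Ω θ / ∑ k, θ k ^ 2)
    (hΩt0 : Ωt 0 = 0) :
    ∀ θ : Fin d → ℝ,
      ((ae * (ℓe (fun i => ∑ k, θ k * e i k) + Ω θ) + be : ℝ) : EReal) =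
      -(⨅ q : {q : Finset (Fin m) → ℝ // ∑ I : Finset (Fin m), q I = 1},
          (((∑ I : Finset (Fin m), q.1 I * ∑ k, θ k * (π I k - Ωt θ * θ k) : ℝ) :
              EReal) +
            (μr : EReal) * ∑ I : Finset (Fin m), φr (q.1 I))) - (b : EReal) := by
  intro θ
  set z : Fin m → ℝ := fun i => ∑ k, θ k * e i k
  have hrado : ∀ I, ∑ k, θ k * (π I k - Ωt θ * θ k) = ∑ i ∈ I, z i - ae * Ω θ := fun I => by
    rw [hπ, sum_mul_sum_sub_mul_self, rescaled_mul_sum_sq hΩ0 hΩt hΩt0]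
  have hLr : LrStar m φr μr z = ((-(ae * ℓe z + be) - b : ℝ) : EReal) := by
    rw [← EReal.add_sub_cancel_right (a := LrStar m φr μr z) (b := b), ← hprop,
      ← neg_neg (LeStar m φe μe z), hlin]
    norm_cast
  change _ = -simplexInf φr μr (fun I => ∑ k, θ k * (π I k - Ωt θ * θ k)) - b
  simp_rw [hrado, simplexInf_sub_const, ← LrStar_eq_simplexInf, hLr]
  norm_cast
  ring

/-- Theorem 3: let `e_i = y_i · x_i` be the edge vectors and
`π_I = Σ_{i∈I} e_i` the rademacher observations. If `φ_e, φ_r` (with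
`μ_e, μ_r`) are proportionate with constant `b` and `f_e` is linear
(`−L_e*(z) = a_e ℓ_e(z) + b_e` with `a_e > 0`), then for any regularizer `Ω`
with `Ω(0) = 0` and any `θ`, the `Ω`-regularized example loss is equivalent to
the rado loss computed over the regularized rados `π_I − Ω̃(θ)·θ`, where
`Ω̃(θ) = a_e Ω(θ)/‖θ‖₂²` for `θ ≠ 0` and `Ω̃(0) = 0`. -/
theorem stmt11 (m d : ℕ) (hm : 1 ≤ m) (hd : 1 ≤ d)
    (x : Fin m → Fin d → ℝ) (y : Fin m → ℝ) (hy : ∀ i, y i = 1 ∨ y i = -1)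
    (e : Fin m → Fin d → ℝ) (he : ∀ i, e i = y i • x i)
    (π : Finset (Fin m) → Fin d → ℝ) (hπ : ∀ I, π I = ∑ i ∈ I, e i)
    (φe φr : ℝ → EReal) (hφe_ne_bot : ∀ t, φe t ≠ ⊥) (hφr_ne_bot : ∀ t, φr t ≠ ⊥)
    (μe μr : ℝ) (hμe : 0 < μe) (hμr : 0 < μr) (b : ℝ)
    -- proportionate, with constant `b`
    (hprop : ∀ z : Fin m → ℝ, LeStar m φe μe z = LrStar m φr μr z + (b : EReal))
    -- `f_e` is linear: `−L_e*(z) = a_e·ℓ_e(z) + b_e`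
    (ae be : ℝ) (hae : 0 < ae) (ℓe : (Fin m → ℝ) → ℝ)
    (hlin : ∀ z : Fin m → ℝ, -LeStar m φe μe z = ((ae * ℓe z + be : ℝ) : EReal))
    -- the regularizer and the rescaled regularizer `Ω̃`
    (Ω : (Fin d → ℝ) → ℝ) (hΩ0 : Ω 0 = 0)
    (Ωt : (Fin d → ℝ) → ℝ)
    (hΩt : ∀ θ : Fin d → ℝ, θ ≠ 0 → Ωt θ = ae * Ω θ / ∑ k, θ k ^ 2)
    (hΩt0 : Ωt 0 = 0) :
    ∀ θ : Fin d → ℝ,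
      ((ae * (ℓe (fun i => ∑ k, θ k * e i k) + Ω θ) + be : ℝ) : EReal) =
      -(⨅ q : {q : Finset (Fin m) → ℝ // ∑ I : Finset (Fin m), q I = 1},
          (((∑ I : Finset (Fin m), q.1 I * ∑ k, θ k * (π I k - Ωt θ * θ k) : ℝ) :
              EReal) +
            (μr : EReal) * ∑ I : Finset (Fin m), φr (q.1 I))) - (b : EReal) :=
  stmt11_general m d e π hπ φe φr μe μr b hprop ae be ℓe hlin Ω hΩ0 Ωt hΩt hΩt0
end

section
/- Let m ≥ 1, d ≥ 1, let Ω be a norm on ℝ^d with dual norm Ω*(v) = sup { v·x : x ∈ ℝ^d, Ω(x) ≤ 1 }. Let e_1, ..., e_m ∈ ℝ^d be edge vectors, and for each subset I ⊆ [m] let π_I = Σ_{i∈I} e_i and let z_I ∈ ℝ^d be an arbitrary noise vector. Then for every θ ∈ ℝ^d: (1/2^m) Σ_{I⊆[m]} exp( −θ·(π_I + z_I) ) ≤ exp( Σ_{i∈[m]} log( 1 + exp(−θ·e_i) ) + ( max_{I⊆[m]} Ω*(z_I) ) · Ω(θ) ). Equivalently, the exponential rado loss over the noise-protected rados is at most exp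 of m times the Ω-regularized logistic loss over the clean examples with regularization weight (1/m)·max_I Ω*(z_I). -/
/-!
The exponent splits as `−θ·π_I − θ·z_I`. The clean part factorises over the subsets,
`Σ_I exp(−θ·π_I) = ∏_i (1 + exp(−θ·e_i))`, and the noise part is controlled by duality,
`−θ·z_I = z_I·(−θ) ≤ Ω*(z_I) Ω(θ)`; the factor `1/2^m ≤ 1` is simply dropped.
-/

open Finset Matrix

section DualNorm

variable {E : Type*} [AddCommGroup E] [Module ℝ E] {Ω : E → ℝ}

-- The set is written `r = f x` rather than as an image so that `hΩs` in `stmt13` unfolds to it.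
noncomputable def dualNorm (Ω : E → ℝ) (f : Module.Dual ℝ E) : ℝ :=
  sSup {r | ∃ x, Ω x ≤ 1 ∧ r = f x}

variable [FiniteDimensional ℝ E] (hΩ_nonneg : ∀ x, 0 ≤ Ω x)
  (hΩ_add : ∀ x y, Ω (x + y) ≤ Ω x + Ω y) (hΩ_smul : ∀ (c : ℝ) x, Ω (c • x) = |c| * Ω x)
  (hΩ_def : ∀ x, Ω x = 0 ↔ x = 0)
include hΩ_nonneg hΩ_add hΩ_smul hΩ_def

-- Make `Ω` the norm of `E`: in finite dimension every linear functional is then continuous,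
-- hence bounded on the unit ball.
theorem bddAbove_dualNorm_set (f : Module.Dual ℝ E) :
    BddAbove {r | ∃ x, Ω x ≤ 1 ∧ r = f x} := by
  let : Norm E := ⟨Ω⟩
  have core : NormedSpace.Core ℝ E := ⟨⟨hΩ_nonneg, hΩ_smul, hΩ_add⟩, hΩ_def⟩
  let := NormedAddCommGroup.ofCore core
  let := NormedSpace.ofCore core
  let F := LinearMap.toContinuousLinearMap f
  refine ⟨‖F‖, ?_⟩
  rintro _ ⟨x, hx, rfl⟩
  calc f x ≤ ‖F x‖ := le_abs_self _
    _ ≤ ‖F‖ * Ω x := F.le_opNorm x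
    _ ≤ ‖F‖ := mul_le_of_le_one_right (norm_nonneg F) hx

theorem apply_le_dualNorm_mul (f : Module.Dual ℝ E) (x : E) : f x ≤ dualNorm Ω f * Ω x := by
  rcases (hΩ_nonneg x).eq_or_lt with hx | hx
  · obtain rfl := (hΩ_def x).mp hx.symm
    rw [map_zero, ← hx, mul_zero]
  have hunit : (Ω x)⁻¹ * f x ≤ dualNorm Ω f := by
    refine le_csSup (bddAbove_dualNorm_set hΩ_nonneg hΩ_add hΩ_smul hΩ_def f)
      ⟨(Ω x)⁻¹ • x, ?_, by simp⟩
    rw [hΩ_smul, abs_of_pos (inv_pos.mpr hx), inv_mul_cancel₀ hx.ne']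
  calc f x = Ω x * ((Ω x)⁻¹ * f x) := by field_simp
    _ ≤ Ω x * dualNorm Ω f := by gcongr
    _ = dualNorm Ω f * Ω x := mul_comm _ _

end DualNorm

theorem neg_dotProduct_le_dualNorm_mul {n : Type*} [Fintype n] {Ω : (n → ℝ) → ℝ}
    (hΩ_nonneg : ∀ x, 0 ≤ Ω x) (hΩ_add : ∀ x y, Ω (x + y) ≤ Ω x + Ω y)
    (hΩ_smul : ∀ (c : ℝ) x, Ω (c • x) = |c| * Ω x) (hΩ_def : ∀ x, Ω x = 0 ↔ x = 0)
    (θ z : n → ℝ) : -(θ ⬝ᵥ z) ≤ dualNorm Ω (dotProductBilin ℝ ℝ z) * Ω θ := by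
  have hneg : Ω (-θ) = Ω θ := by simpa using hΩ_smul (-1) θ
  calc -(θ ⬝ᵥ z) = dotProductBilin ℝ ℝ z (-θ) := by simp [dotProduct_comm]
    _ ≤ _ := hneg ▸ apply_le_dualNorm_mul hΩ_nonneg hΩ_add hΩ_smul hΩ_def _ _

theorem sum_exp_sum_eq_exp_sum_log_one_add_exp {ι : Type*} [Fintype ι] (a : ι → ℝ) :
    ∑ I : Finset ι, Real.exp (∑ i ∈ I, a i) = Real.exp (∑ i, Real.log (1 + Real.exp (a i))) := by
  have hpos (i : ι) : 0 < 1 + Real.exp (a i) := by positivity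
  simp_rw [Real.exp_sum, Real.exp_log (hpos _)]
  rw [prod_one_add, powerset_univ]

theorem stmt13_general (m d : ℕ)
    (Ω : (Fin d → ℝ) → ℝ)
    -- `Ω` is a norm
    (hΩ_nonneg : ∀ x, 0 ≤ Ω x)
    (hΩ_add : ∀ x y, Ω (x + y) ≤ Ω x + Ω y)
    (hΩ_smul : ∀ (c : ℝ) (x : Fin d → ℝ), Ω (c • x) = |c| * Ω x)
    (hΩ_def : ∀ x, Ω x = 0 ↔ x = 0)
    -- `Ω*` is its dual norm
    (Ωs : (Fin d → ℝ) → ℝ)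
    (hΩs : ∀ v, Ωs v =
      sSup {r : ℝ | ∃ x : Fin d → ℝ, Ω x ≤ 1 ∧ r = ∑ k, v k * x k})
    (e : Fin m → Fin d → ℝ)
    (π : Finset (Fin m) → Fin d → ℝ) (hπ : ∀ I, π I = ∑ i ∈ I, e i)
    (zn : Finset (Fin m) → Fin d → ℝ) :
    ∀ θ : Fin d → ℝ,
      (1 / 2 ^ m) * ∑ I : Finset (Fin m),
          Real.exp (-∑ k, θ k * (π I k + zn I k)) ≤
      Real.exp ((∑ i, Real.log (1 + Real.exp (-∑ k, θ k * e i k))) +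
        (⨆ I : Finset (Fin m), Ωs (zn I)) * Ω θ) := by
  intro θ
  set M := ⨆ I : Finset (Fin m), Ωs (zn I)
  have hnoise (I : Finset (Fin m)) : -(θ ⬝ᵥ zn I) ≤ M * Ω θ :=
    calc -(θ ⬝ᵥ zn I) ≤ Ωs (zn I) * Ω θ := by
          rw [hΩs]; exact neg_dotProduct_le_dualNorm_mul hΩ_nonneg hΩ_add hΩ_smul hΩ_def θ _
      _ ≤ M * Ω θ := mul_le_mul_of_nonneg_right
          (le_ciSup (Finite.bddAbove_range fun J ↦ Ωs (zn J)) I) (hΩ_nonneg θ)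
  have hsplit (I : Finset (Fin m)) :
      -∑ k, θ k * (π I k + zn I k) = ∑ i ∈ I, -(θ ⬝ᵥ e i) + -(θ ⬝ᵥ zn I) := by
    rw [sum_neg_distrib, ← dotProduct_sum, ← hπ, ← neg_add, ← dotProduct_add]
    rfl
  calc (1 / 2 ^ m) * ∑ I : Finset (Fin m), Real.exp (-∑ k, θ k * (π I k + zn I k))
      ≤ ∑ I : Finset (Fin m), Real.exp (-∑ k, θ k * (π I k + zn I k)) :=
        mul_le_of_le_one_left (by positivity) (div_le_one_of_le₀ (one_le_pow₀ one_le_two)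
          (by positivity))
    _ ≤ ∑ I : Finset (Fin m), Real.exp (∑ i ∈ I, -(θ ⬝ᵥ e i)) * Real.exp (M * Ω θ) := by
        gcongr with I
        rw [hsplit, Real.exp_add]
        gcongr
        exact hnoise I
    _ = _ := by
        rw [← sum_mul, sum_exp_sum_eq_exp_sum_log_one_add_exp, ← Real.exp_add]
        rfl

/-- Theorem 6 (second part): for any norm `Ω` on `ℝ^d` with dual norm `Ω*`,
edge vectors `e_i`, rados `π_I = Σ_{i∈I} e_i` and arbitrary noise vectors
`z_I`, the exponential rado loss over the noise-protected rados is bounded by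
the exponential of the `Ω`-regularized logistic loss over the clean examples:
`(1/2^m) Σ_I exp(−θ·(π_I + z_I)) ≤
  exp( Σ_i log(1 + exp(−θ·e_i)) + (max_I Ω*(z_I))·Ω(θ) )`. -/
theorem stmt13 (m d : ℕ) (hm : 1 ≤ m) (hd : 1 ≤ d)
    (Ω : (Fin d → ℝ) → ℝ)
    -- `Ω` is a norm
    (hΩ_nonneg : ∀ x, 0 ≤ Ω x)
    (hΩ_add : ∀ x y, Ω (x + y) ≤ Ω x + Ω y)
    (hΩ_smul : ∀ (c : ℝ) (x : Fin d → ℝ), Ω (c • x) = |c| * Ω x)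
    (hΩ_def : ∀ x, Ω x = 0 ↔ x = 0)
    -- `Ω*` is its dual norm
    (Ωs : (Fin d → ℝ) → ℝ)
    (hΩs : ∀ v, Ωs v =
      sSup {r : ℝ | ∃ x : Fin d → ℝ, Ω x ≤ 1 ∧ r = ∑ k, v k * x k})
    (e : Fin m → Fin d → ℝ)
    (π : Finset (Fin m) → Fin d → ℝ) (hπ : ∀ I, π I = ∑ i ∈ I, e i)
    (zn : Finset (Fin m) → Fin d → ℝ) :
    ∀ θ : Fin d → ℝ,
      (1 / 2 ^ m) * ∑ I : Finset (Fin m),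
          Real.exp (-∑ k, θ k * (π I k + zn I k)) ≤
      Real.exp ((∑ i, Real.log (1 + Real.exp (-∑ k, θ k * e i k))) +
        (⨆ I : Finset (Fin m), Ωs (zn I)) * Ω θ) :=
  stmt13_general m d Ω hΩ_nonneg hΩ_add hΩ_smul hΩ_def Ωs hΩs e π hπ zn
end

section
/- Let n ≥ 1, d ≥ 1, T ≥ 1, let π_1, ..., π_n ∈ ℝ^d (rados), ω ∈ ℝ, and Ω : ℝ^d → ℝ with Ω(0) = 0. Let ι(1), ..., ι(T) ∈ [d] and α_1, ..., α_T ∈ ℝ, and define θ_0 = 0 and θ_t = θ_{t−1} + α_t · 1_{ι(t)} (1_k the k-th canonical basis vector of ℝ^d). Define weights w_{0,j} = 1/n for j ∈ [n], δ_t = ω·( Ω(θ_t) − Ω(θ_{t−1}) ), normalizers Z_t = Σ_{j∈[n]} w_{t−1,j} exp( −α_t π_{j,ι(t)} + δ_t ) and w_{t,j} = w_{t−1,j} exp( −α_t π_{j,ι(t)} + δ_t ) / Z_t. Then the regularized exponential rado loss of θ_T equals the product of the normalizers: (1/n) Σ_{j∈[n]} exp( −θ_T·π_j + ω Ω(θ_T)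 ) = Π_{t=1}^T Z_t. -/
/-!
The weights are the normalized versions of the unnormalized weights
`u_{t,j} = exp(-θ_t·π_j + ωΩ(θ_t))`, which satisfy `u_{t+1,j} = u_{t,j} exp(-α_t π_{j,ι(t)} + δ_t)`.
Hence `Z_t = (Σ_j u_{t+1,j}) / (Σ_j u_{t,j})`, the product of the normalizers telescopes to
`(Σ_j u_{T,j}) / (Σ_j u_{0,j})`, and `Σ_j u_{0,j} = n` because `θ_0 = 0` and `Ω(0) = 0`.
-/

open Finset

lemma prod_range_div_of_ne_zero {K : Type*} [Field K] (f : ℕ → K) (hf : ∀ t, f t ≠ 0) (n : ℕ) :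
    ∏ i ∈ range n, f (i + 1) / f i = f n / f 0 := by
  simpa using congrArg Units.val (prod_range_div (fun t ↦ Units.mk0 (f t) (hf t)) n)

section NormalizedWeights

variable {K ι : Type*} [Field K] [Fintype ι] {T : ℕ}
  {u w : ℕ → ι → K} {c : Fin T → ι → K} {Z : Fin T → K}

lemma normalizer_eq_div_of_weights_eq
    (hu : ∀ t : Fin T, ∀ j, u (t.val + 1) j = u t.val j * c t j)
    (hZ : ∀ t : Fin T, Z t = ∑ j, w t.val j * c t j)
    {t : Fin T} (ht : ∀ j, w t.val j = u t.val j / ∑ i, u t.val i) :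
    Z t = (∑ i, u (t.val + 1) i) / ∑ i, u t.val i := by
  simp only [hZ, ht, hu, div_mul_eq_mul_div, ← sum_div]

lemma weights_eq_div_sum (hS : ∀ t, ∑ i, u t i ≠ 0)
    (hu : ∀ t : Fin T, ∀ j, u (t.val + 1) j = u t.val j * c t j)
    (hw0 : ∀ j, w 0 j = u 0 j / ∑ i, u 0 i)
    (hZ : ∀ t : Fin T, Z t = ∑ j, w t.val j * c t j)
    (hw : ∀ t : Fin T, ∀ j, w (t.val + 1) j = w t.val j * c t j / Z t)
    {t : ℕ} (ht : t ≤ T) (j : ι) :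
    w t j = u t j / ∑ i, u t i := by
  induction t generalizing j with
  | zero => exact hw0 j
  | succ t ih =>
    have hwt := ih (by omega)
    let s : Fin T := ⟨t, by omega⟩
    rw [show t = s.val from rfl, hw, normalizer_eq_div_of_weights_eq hu hZ hwt, hwt, hu]
    field_simp [hS]
    ring

theorem prod_normalizers_eq_div (hS : ∀ t, ∑ i, u t i ≠ 0)
    (hu : ∀ t : Fin T, ∀ j, u (t.val + 1) j = u t.val j * c t j)
    (hw0 : ∀ j, w 0 j = u 0 j / ∑ i, u 0 i)
    (hZ : ∀ t : Fin T, Z t = ∑ j, w t.val j * c t j)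
    (hw : ∀ t : Fin T, ∀ j, w (t.val + 1) j = w t.val j * c t j / Z t) :
    ∏ t, Z t = (∑ i, u T i) / ∑ i, u 0 i := by
  have hZt (t : Fin T) : Z t = (∑ i, u (t.val + 1) i) / ∑ i, u t.val i :=
    normalizer_eq_div_of_weights_eq hu hZ (weights_eq_div_sum hS hu hw0 hZ hw t.isLt.le)
  simp only [hZt]
  rw [Fin.prod_univ_eq_prod_range (fun t ↦ (∑ i, u (t + 1) i) / ∑ i, u t i),
    prod_range_div_of_ne_zero _ hS]

end NormalizedWeights

theorem stmt14_general (n d T : ℕ) (hn : 1 ≤ n)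
    (π : Fin n → Fin d → ℝ) (ω : ℝ)
    (Ω : (Fin d → ℝ) → ℝ) (hΩ0 : Ω 0 = 0)
    (ι : Fin T → Fin d) (α : Fin T → ℝ)
    (θ : ℕ → Fin d → ℝ) (hθ0 : θ 0 = 0)
    (hθ : ∀ t : Fin T, θ (t.val + 1) = θ t.val + α t • (Pi.single (ι t) 1 : Fin d → ℝ))
    (w : ℕ → Fin n → ℝ) (hw0 : ∀ j, w 0 j = 1 / n)
    (δ Z : Fin T → ℝ)
    (hδ : ∀ t : Fin T, δ t = ω * (Ω (θ (t.val + 1)) - Ω (θ t.val)))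
    (hZ : ∀ t : Fin T,
      Z t = ∑ j, w t.val j * Real.exp (-α t * π j (ι t) + δ t))
    (hw : ∀ t : Fin T, ∀ j,
      w (t.val + 1) j = w t.val j * Real.exp (-α t * π j (ι t) + δ t) / Z t) :
    (1 / n) * ∑ j, Real.exp (-(∑ k, θ T k * π j k) + ω * Ω (θ T)) =
      ∏ t : Fin T, Z t := by
  have : Nonempty (Fin n) := ⟨⟨0, hn⟩⟩
  set u : ℕ → Fin n → ℝ := fun t j ↦ Real.exp (-(θ t ⬝ᵥ π j) + ω * Ω (θ t))
  have hu0 (j : Fin n) : u 0 j = 1 := by simp [u, hθ0, hΩ0]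
  have hS (t : ℕ) : ∑ i, u t i ≠ 0 := (sum_pos (fun i _ ↦ Real.exp_pos _) univ_nonempty).ne'
  have hu (t : Fin T) (j : Fin n) :
      u (t.val + 1) j = u t.val j * Real.exp (-α t * π j (ι t) + δ t) := by
    simp only [u, hθ, hδ, add_dotProduct, smul_dotProduct, single_dotProduct, ← Real.exp_add]
    ring_nf
  rw [prod_normalizers_eq_div hS hu (by simp [hw0, hu0]) hZ hw, sum_congr rfl fun j _ ↦ hu0 j,
    sum_const, card_univ, Fintype.card_fin, nsmul_one, one_div, div_eq_inv_mul]
  rfl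

/-- The weight-unravelling identity behind `Ω-R.AdaBoost`: with
`θ_t = θ_{t−1} + α_t·1_{ι(t)}`, `δ_t = ω(Ω(θ_t) − Ω(θ_{t−1}))`,
normalizers `Z_t = Σ_j w_{t−1,j} exp(−α_t π_{j,ι(t)} + δ_t)` and weight
updates `w_{t,j} = w_{t−1,j} exp(−α_t π_{j,ι(t)} + δ_t)/Z_t` starting from
`w_{0,j} = 1/n` and `θ_0 = 0`, the regularized exponential rado loss of `θ_T`
equals the product of the normalizers:
`(1/n) Σ_j exp(−θ_T·π_j + ω Ω(θ_T)) = Π_{t=1}^T Z_t`. -/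
theorem stmt14 (n d T : ℕ) (hn : 1 ≤ n) (hd : 1 ≤ d) (hT : 1 ≤ T)
    (π : Fin n → Fin d → ℝ) (ω : ℝ)
    (Ω : (Fin d → ℝ) → ℝ) (hΩ0 : Ω 0 = 0)
    (ι : Fin T → Fin d) (α : Fin T → ℝ)
    (θ : ℕ → Fin d → ℝ) (hθ0 : θ 0 = 0)
    (hθ : ∀ t : Fin T, θ (t.val + 1) = θ t.val + α t • (Pi.single (ι t) 1 : Fin d → ℝ))
    (w : ℕ → Fin n → ℝ) (hw0 : ∀ j, w 0 j = 1 / n)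
    (δ Z : Fin T → ℝ)
    (hδ : ∀ t : Fin T, δ t = ω * (Ω (θ (t.val + 1)) - Ω (θ t.val)))
    (hZ : ∀ t : Fin T,
      Z t = ∑ j, w t.val j * Real.exp (-α t * π j (ι t) + δ t))
    (hw : ∀ t : Fin T, ∀ j,
      w (t.val + 1) j = w t.val j * Real.exp (-α t * π j (ι t) + δ t) / Z t) :
    (1 / n) * ∑ j, Real.exp (-(∑ k, θ T k * π j k) + ω * Ω (θ T)) =
      ∏ t : Fin T, Z t :=
  stmt14_general n d T hn π ω Ω hΩ0 ι α θ hθ0 hθ w hw0 δ Z hδ hZ hw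
end

section
/- Let n ≥ 1, let w ∈ ℝ^n with w_j ≥ 0 for all j and Σ_{j=1}^n w_j = 1, let v ∈ ℝ^n with −1 ≤ v_j ≤ 1 for all j, set r = Σ_{j=1}^n w_j v_j and assume −1 < r < 1. With α = (1/2)·log( (1+r)/(1−r) ), one has Σ_{j=1}^n w_j exp( −α v_j ) ≤ √(1 − r²). -/
/-! Since `|v j| ≤ 1`, convexity of `exp` gives `exp (t * v j) ≤ cosh t + v j * sinh t`; averaging
against `w` bounds the sum by `cosh t + r * sinh t`, and at `t = -artanh r` this is `√(1 - r ^ 2)`. -/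

open Real Finset

theorem Real.sum_mul_exp_mul_le {ι : Type*} (s : Finset ι) (w v : ι → ℝ) (t : ℝ)
    (hw : ∀ j ∈ s, 0 ≤ w j) (hwsum : ∑ j ∈ s, w j = 1) (hv : ∀ j ∈ s, |v j| ≤ 1) :
    ∑ j ∈ s, w j * exp (t * v j) ≤ cosh t + (∑ j ∈ s, w j * v j) * sinh t :=
  calc ∑ j ∈ s, w j * exp (t * v j) ≤ ∑ j ∈ s, w j * (cosh t + v j * sinh t) :=
        sum_le_sum fun j hj ↦ mul_le_mul_of_nonneg_left
          (mul_comm t (v j) ▸ exp_mul_le_cosh_add_mul_sinh (hv j hj) t) (hw j hj)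
    _ = cosh t + (∑ j ∈ s, w j * v j) * sinh t := by
        simp only [mul_add, sum_add_distrib, ← sum_mul, hwsum, ← mul_assoc, one_mul]

theorem Real.cosh_artanh_sub_mul_sinh_artanh {r : ℝ} (hr : r ∈ Set.Ioo (-1) 1) :
    cosh (artanh r) - r * sinh (artanh r) = √(1 - r ^ 2) := by
  have hpos : 0 < 1 - r ^ 2 := by nlinarith [hr.1, hr.2]
  rw [cosh_artanh hr, sinh_artanh hr]
  field_simp
  rw [sq_sqrt hpos.le]

theorem stmt15_general (n : ℕ)
    (w : Fin n → ℝ) (hw : ∀ j, 0 ≤ w j) (hwsum : ∑ j, w j = 1)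
    (v : Fin n → ℝ) (hv : ∀ j, -1 ≤ v j ∧ v j ≤ 1)
    (r : ℝ) (hr : r = ∑ j, w j * v j) (hr1 : -1 < r) (hr2 : r < 1)
    (α : ℝ) (hα : α = (1 / 2) * Real.log ((1 + r) / (1 - r))) :
    ∑ j, w j * Real.exp (-α * v j) ≤ Real.sqrt (1 - r ^ 2) := by
  have hα_artanh : α = artanh r := by rw [hα, artanh_eq_half_log ⟨hr1.le, hr2.le⟩]
  calc ∑ j, w j * exp (-α * v j) ≤ cosh (-α) + r * sinh (-α) := by
        rw [hr]
        exact sum_mul_exp_mul_le _ w v _ (fun j _ ↦ hw j) hwsum fun j _ ↦ abs_le.2 (hv j)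
    _ = √(1 - r ^ 2) := by
        rw [cosh_neg, sinh_neg, hα_artanh, ← cosh_artanh_sub_mul_sinh_artanh ⟨hr1, hr2⟩]
        ring

/-- The classical AdaBoost potential bound: if `w` lies in the simplex,
`v_j ∈ [−1,1]`, `r = Σ_j w_j v_j ∈ (−1,1)` and
`α = (1/2) log((1+r)/(1−r))`, then `Σ_j w_j exp(−α v_j) ≤ √(1 − r²)`. -/
theorem stmt15 (n : ℕ) (hn : 1 ≤ n)
    (w : Fin n → ℝ) (hw : ∀ j, 0 ≤ w j) (hwsum : ∑ j, w j = 1)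
    (v : Fin n → ℝ) (hv : ∀ j, -1 ≤ v j ∧ v j ≤ 1)
    (r : ℝ) (hr : r = ∑ j, w j * v j) (hr1 : -1 < r) (hr2 : r < 1)
    (α : ℝ) (hα : α = (1 / 2) * Real.log ((1 + r) / (1 - r))) :
    ∑ j, w j * Real.exp (-α * v j) ≤ Real.sqrt (1 - r ^ 2) :=
  stmt15_general n w hw hwsum v hv r hr hr1 hr2 α hα
end

section
/- For every γ ∈ (0,1], every b with 0 < b ≤ 3γ/11, and every z with γ ≤ z < 1: log( 1/(1−z²) ) − b · log( (1+z)/(1−z) ) ≥ b z². -/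
/-!
The left-hand side equals `(1 - b) (-log (1 - z)) - (1 + b) log (1 + z)`. The cubic Taylor
bounds `-log (1 - z) ≥ z + z²/2 + z³/3` and `log (1 + z) ≤ z - z²/2 + z³/3` (from the Mercator
series, the second by the alternating series test) reduce the claim to
`z² - 2bz - 2bz³/3 ≥ bz²`, that is `b (2 + z + 2z²/3) ≤ z`, which holds because
`2 + z + 2z²/3 < 11/3` for `z < 1` and `11b/3 ≤ γ ≤ z`.
-/

open Finset

namespace Real

theorem add_sq_div_two_add_cube_div_three_le_neg_log_one_sub {x : ℝ} (hx0 : 0 ≤ x)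
    (hx1 : x < 1) :
    x + x ^ 2 / 2 + x ^ 3 / 3 ≤ -log (1 - x) := by
  have hsum := hasSum_pow_div_log_of_abs_lt_one (abs_lt.2 ⟨by linarith, hx1⟩)
  have h := sum_le_hasSum (range 3) (fun i _ => by positivity) hsum
  norm_num [sum_range_succ] at h
  linarith

theorem log_one_add_le_sub_sq_div_two_add_cube_div_three {x : ℝ} (hx0 : 0 ≤ x)
    (hx1 : x < 1) :
    log (1 + x) ≤ x - x ^ 2 / 2 + x ^ 3 / 3 := by
  set f : ℕ → ℝ := fun n => x ^ (n + 1) / (n + 1)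
  have hsum : HasSum (fun n => (-1) ^ n * f n) (log (1 + x)) := by
    have hx : |-x| < 1 := by rwa [abs_neg, abs_of_nonneg hx0]
    have h := (hasSum_pow_div_log_of_abs_lt_one hx).neg
    rw [sub_neg_eq_add, neg_neg] at h
    refine h.congr_fun fun n => ?_
    simp only [f]
    rw [neg_pow x, pow_succ (-1 : ℝ)]
    ring
  have hf : Antitone f := by
    refine antitone_nat_of_succ_le fun n => ?_
    simp only [f, Nat.cast_succ]
    gcongr ?_ / ?_
    · exact pow_le_pow_of_le_one hx0 hx1.le (n + 1).le_succ
    · linarith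
  have h := hf.tendsto_le_alternating_series hsum.tendsto_sum_nat 1
  norm_num [sum_range_succ, f] at h
  linarith

theorem log_one_div_one_sub_sq_sub_mul_log_div (b : ℝ) {z : ℝ} (hz0 : -1 < z) (hz1 : z < 1) :
    log (1 / (1 - z ^ 2)) - b * log ((1 + z) / (1 - z)) =
      (1 - b) * -log (1 - z) - (1 + b) * log (1 + z) := by
  have h1 : 1 - z ≠ 0 := by linarith
  have h2 : 1 + z ≠ 0 := by linarith
  rw [one_div, log_inv, show 1 - z ^ 2 = (1 - z) * (1 + z) by ring, log_mul h1 h2, log_div h2 h1]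
  ring

end Real

theorem stmt17_general (γ b z : ℝ)
    (hb0 : 0 < b) (hb : b ≤ 3 * γ / 11) (hzγ : γ ≤ z) (hz1 : z < 1) :
    Real.log (1 / (1 - z ^ 2)) - b * Real.log ((1 + z) / (1 - z)) ≥ b * z ^ 2 := by
  have hz0 : 0 < z := by linarith
  have hb1 : b < 1 := by linarith
  have hcoeff : b * (2 + z + 2 * z ^ 2 / 3) ≤ z := by nlinarith
  rw [ge_iff_le, Real.log_one_div_one_sub_sq_sub_mul_log_div b (by linarith) hz1]
  calc b * z ^ 2
      ≤ (1 - b) * (z + z ^ 2 / 2 + z ^ 3 / 3) - (1 + b) * (z - z ^ 2 / 2 + z ^ 3 / 3) := by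
        nlinarith [mul_le_mul_of_nonneg_left hcoeff hz0.le]
    _ ≤ (1 - b) * -Real.log (1 - z) - (1 + b) * Real.log (1 + z) := by
      gcongr
      · exact Real.add_sq_div_two_add_cube_div_three_le_neg_log_one_sub hz0.le hz1
      · exact Real.log_one_add_le_sub_sq_div_two_add_cube_div_three hz0.le hz1

/-- The key inequality in the lasso/ℓ∞ boosting proof: for every `γ ∈ (0,1]`,
every `b` with `0 < b ≤ 3γ/11`, and every `z` with `γ ≤ z < 1`,
`log(1/(1−z²)) − b·log((1+z)/(1−z)) ≥ b z²`. -/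
theorem stmt17 (γ b z : ℝ) (hγ0 : 0 < γ) (hγ1 : γ ≤ 1)
    (hb0 : 0 < b) (hb : b ≤ 3 * γ / 11) (hzγ : γ ≤ z) (hz1 : z < 1) :
    Real.log (1 / (1 - z ^ 2)) - b * Real.log ((1 + z) / (1 - z)) ≥ b * z ^ 2 :=
  stmt17_general γ b z hb0 hb hzγ hz1
end

section
/- For every a with 0 < a < 1/5 there exists z* > 0 such that for all z with 0 ≤ z ≤ min(z*, 1) and z < 1: log( 1/(1−z²) ) − a · ( log( (1+z)/(1−z) ) )² ≥ a z². (Moreover the conclusion holds with z* = 0.98 when a = 1/7, and with z* = 0.999 when a = 1/10.) -/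
/-!
Put `t = artanh z`, so that `z = tanh t ≤ t`, `log ((1 + z) / (1 - z)) = 2 t` and
`log (1 / (1 - z²)) = 2 log cosh t`; the claim becomes `4 a t² + a z² ≤ 2 log cosh t`.
For small `t`, `log x ≥ 2 (x - 1) / (x + 1)` and `cosh t ≥ 1 + t²/2 + t⁴/24` reduce it to a
polynomial inequality in `t²`; for large `t`, `log cosh t ≥ t - log 2` and `z ≤ 1` do. For the
explicit values of `a` the two regimes cover `t ≤ artanh z*`. For general `a` the cruder bounds
`log (1 / (1 - z²)) ≥ z²` and `log ((1 + z) / (1 - z)) ≤ 2 z / (1 - z)` suffice near `z = 0`.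
-/

open Real Set

theorem two_mul_le_log_one_add_sub_log_one_sub {w : ℝ} (h₀ : 0 ≤ w) (h₁ : w < 1) :
    2 * w ≤ log (1 + w) - log (1 - w) := by
  have := le_hasSum (hasSum_log_sub_log_of_abs_lt_one (abs_lt.2 ⟨by linarith, h₁⟩)) 0
    fun k _ ↦ by positivity
  simpa using this

theorem self_le_artanh {z : ℝ} (h₀ : 0 ≤ z) (h₁ : z < 1) : z ≤ artanh z := by
  rw [artanh_eq_half_log ⟨by linarith, h₁.le⟩, log_div (by linarith) (by linarith)]
  linarith [two_mul_le_log_one_add_sub_log_one_sub h₀ h₁]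

theorem two_mul_sub_one_div_add_one_le_log {x : ℝ} (hx : 1 ≤ x) :
    2 * (x - 1) / (x + 1) ≤ log x := by
  have hw₀ : 0 ≤ (x - 1) / (x + 1) := div_nonneg (by linarith) (by linarith)
  have hw₁ : (x - 1) / (x + 1) < 1 := (div_lt_one (by linarith)).2 (by linarith)
  have key := two_mul_le_log_one_add_sub_log_one_sub hw₀ hw₁
  rw [← log_div (by positivity) (by linarith)] at key
  convert key using 2
  · ring
  · field_simp
    ring

theorem one_add_sq_div_two_add_pow_four_div_le_cosh (t : ℝ) :
    1 + t ^ 2 / 2 + t ^ 4 / 24 ≤ cosh t := by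
  have := sum_le_hasSum (Finset.range 3)
    (fun n _ ↦ div_nonneg ((even_two_mul n).pow_nonneg t) (Nat.cast_nonneg _)) (hasSum_cosh t)
  norm_num [Finset.sum_range_succ, Nat.factorial] at this
  linarith

theorem sub_log_two_le_log_cosh (t : ℝ) : t - log 2 ≤ log (cosh t) := by
  have : exp t / 2 ≤ cosh t := by rw [cosh_eq]; linarith [exp_pos (-t)]
  calc t - log 2 = log (exp t / 2) := by rw [log_div (exp_ne_zero t) two_ne_zero, log_exp]
    _ ≤ log (cosh t) := log_le_log (by positivity) this

theorem log_one_div_one_sub_sq_eq {z : ℝ} (hz : z ∈ Ioo (-1) 1) :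
    log (1 / (1 - z ^ 2)) = 2 * log (cosh (artanh z)) := by
  have : 0 ≤ 1 - z ^ 2 := by nlinarith [hz.1, hz.2]
  rw [cosh_artanh hz, one_div, one_div, log_inv, log_inv, log_sqrt this]
  ring

theorem log_one_add_div_one_sub_eq {z : ℝ} (hz : z ∈ Icc (-1) 1) :
    log ((1 + z) / (1 - z)) = 2 * artanh z := by
  rw [artanh_eq_half_log hz]
  ring

theorem five_mul_sq_le_two_log_cosh {a t : ℝ}
    (h : 5 * a * (48 + 12 * t ^ 2 + t ^ 4) ≤ 48 + 4 * t ^ 2) :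
    5 * a * t ^ 2 ≤ 2 * log (cosh t) := by
  set y := t ^ 2 / 2 + t ^ 4 / 24
  have hy : 0 ≤ y := by positivity
  have hcosh : 1 + y ≤ cosh t := by
    simp only [y]
    linarith [one_add_sq_div_two_add_pow_four_div_le_cosh t]
  -- `x ↦ 2 (x - 1) / (x + 1) = 2 - 4 / (x + 1)` is increasing
  have hmono : 2 * y / (2 + y) ≤ 2 * (cosh t - 1) / (cosh t + 1) := by
    rw [div_le_div_iff₀ (by positivity) (by linarith)]
    nlinarith
  have hlog := two_mul_sub_one_div_add_one_le_log (by linarith : 1 ≤ cosh t)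
  have hpoly : 5 * a * t ^ 2 ≤ 2 * (2 * y / (2 + y)) := by
    rw [← mul_div_assoc, le_div_iff₀ (by positivity)]
    simp only [y]
    nlinarith [sq_nonneg t]
  linarith

theorem ridge_ineq_of_split {a t₀ T : ℝ} (ha : 0 ≤ a)
    (hsmall : ∀ t, 0 ≤ t → t ≤ t₀ → 5 * a * (48 + 12 * t ^ 2 + t ^ 4) ≤ 48 + 4 * t ^ 2)
    (hlarge : ∀ t, t₀ ≤ t → t ≤ T → 4 * a * t ^ 2 + a + 2 * log 2 ≤ 2 * t)
    {z : ℝ} (hz₀ : 0 ≤ z) (hz₁ : z < 1) (hzT : artanh z ≤ T) :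
    a * z ^ 2 ≤ log (1 / (1 - z ^ 2)) - a * log ((1 + z) / (1 - z)) ^ 2 := by
  rw [log_one_div_one_sub_sq_eq ⟨by linarith, hz₁⟩,
    log_one_add_div_one_sub_eq ⟨by linarith, hz₁.le⟩]
  set t := artanh z
  have hzt : z ≤ t := self_le_artanh hz₀ hz₁
  rcases le_total t t₀ with ht | ht
  · have haz : a * z ^ 2 ≤ a * t ^ 2 := by gcongr
    linarith [five_mul_sq_le_two_log_cosh (hsmall t (hz₀.trans hzt) ht)]
  · have haz : a * z ^ 2 ≤ a := mul_le_of_le_one_right ha (by nlinarith)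
    linarith [sub_log_two_le_log_cosh t, hlarge t ht hzT]

theorem ridge_ineq_of_le_one_sub_five_mul_div {a : ℝ} (ha₀ : 0 ≤ a) (ha₁ : a < 1) {z : ℝ}
    (hz₀ : 0 ≤ z) (hz : z ≤ (1 - 5 * a) / (2 * (1 - a))) (hz₁ : z < 1) :
    a * z ^ 2 ≤ log (1 / (1 - z ^ 2)) - a * log ((1 + z) / (1 - z)) ^ 2 := by
  have h1z : 0 < 1 - z := by linarith
  have hlog₁ : z ^ 2 ≤ log (1 / (1 - z ^ 2)) := by
    have := one_sub_inv_le_log_of_pos (one_div_pos.2 (by nlinarith : 0 < 1 - z ^ 2))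
    rwa [inv_div, div_one, sub_sub_cancel] at this
  have hlog₂ : log ((1 + z) / (1 - z)) ≤ 2 * z / (1 - z) := by
    have := log_le_sub_one_of_pos (x := (1 + z) / (1 - z)) (by positivity)
    rwa [div_sub_one h1z.ne', show 1 + z - (1 - z) = 2 * z by ring] at this
  have hlog₂' : log ((1 + z) / (1 - z)) ^ 2 ≤ (2 * z / (1 - z)) ^ 2 :=
    pow_le_pow_left₀ (log_nonneg ((le_div_iff₀ h1z).2 (by linarith))) hlog₂ 2
  have hkey : 4 * a ≤ (1 - a) * (1 - z) ^ 2 := by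
    rw [le_div_iff₀ (by linarith)] at hz
    nlinarith
  have hpoly : a * (2 * z / (1 - z)) ^ 2 + a * z ^ 2 ≤ z ^ 2 := by
    rw [div_pow, mul_div_assoc', div_add' _ _ _ (by positivity), div_le_iff₀ (by positivity)]
    nlinarith [sq_nonneg z]
  nlinarith [mul_le_mul_of_nonneg_left hlog₂' ha₀]

theorem ridge_ineq_of_le_98 {z : ℝ} (hz₀ : 0 ≤ z) (hz : z ≤ 0.98) :
    1 / 7 * z ^ 2 ≤ log (1 / (1 - z ^ 2)) - 1 / 7 * log ((1 + z) / (1 - z)) ^ 2 := by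
  refine ridge_ineq_of_split (t₀ := 13 / 10) (T := 2311 / 1000) (by norm_num)
    (fun t ht₀ ht ↦ ?_) (fun t ht₀ ht ↦ ?_) hz₀ (by linarith) ?_
  · have hu : t ^ 2 ≤ 169 / 100 := by nlinarith
    nlinarith
  · nlinarith [log_two_lt_d9]
  · calc artanh z ≤ artanh 0.98 := artanh_le_artanh (by linarith) (by norm_num) hz
      _ ≤ 2311 / 1000 := by
        have hlog := log_le_log (by norm_num) (by norm_num : (99 : ℝ) ^ 3 ≤ 2 ^ 20)
        rw [log_pow, log_pow, Nat.cast_ofNat, Nat.cast_ofNat] at hlog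
        rw [artanh_eq_half_log (by norm_num)]
        norm_num
        linarith [log_two_lt_d9]

theorem ridge_ineq_of_le_999 {z : ℝ} (hz₀ : 0 ≤ z) (hz : z ≤ 0.999) :
    1 / 10 * z ^ 2 ≤ log (1 / (1 - z ^ 2)) - 1 / 10 * log ((1 + z) / (1 - z)) ^ 2 := by
  refine ridge_ineq_of_split (t₀ := 2) (T := 3813 / 1000) (by norm_num)
    (fun t ht₀ ht ↦ ?_) (fun t ht₀ ht ↦ ?_) hz₀ (by linarith) ?_
  · have hu : t ^ 2 ≤ 4 := by nlinarith
    nlinarith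
  · nlinarith [log_two_lt_d9]
  · calc artanh z ≤ artanh 0.999 := artanh_le_artanh (by linarith) (by norm_num) hz
      _ ≤ 3813 / 1000 := by
        have hlog := log_le_log (by norm_num) (by norm_num : (1999 : ℝ) ≤ 2 ^ 11)
        rw [log_pow, Nat.cast_ofNat] at hlog
        rw [artanh_eq_half_log (by norm_num)]
        norm_num
        linarith [log_two_lt_d9]

/-- The key inequality in the ridge boosting proof: for every `0 < a < 1/5`
there is a `z* > 0` such that
`log(1/(1−z²)) − a·(log((1+z)/(1−z)))² ≥ a z²` for all
`0 ≤ z ≤ min(z*, 1)`, `z < 1`. Moreover the conclusion holds with `z* = 0.98`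
when `a = 1/7`, and with `z* = 0.999` when `a = 1/10`. -/
theorem stmt18 (a : ℝ) (ha0 : 0 < a) (ha5 : a < 1 / 5) :
    (∃ zs : ℝ, 0 < zs ∧
      ∀ z : ℝ, 0 ≤ z → z ≤ min zs 1 → z < 1 →
        Real.log (1 / (1 - z ^ 2)) -
          a * (Real.log ((1 + z) / (1 - z))) ^ 2 ≥ a * z ^ 2) ∧
    (a = 1 / 7 →
      ∀ z : ℝ, 0 ≤ z → z ≤ min 0.98 1 → z < 1 →
        Real.log (1 / (1 - z ^ 2)) -
          a * (Real.log ((1 + z) / (1 - z))) ^ 2 ≥ a * z ^ 2) ∧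
    (a = 1 / 10 →
      ∀ z : ℝ, 0 ≤ z → z ≤ min 0.999 1 → z < 1 →
        Real.log (1 / (1 - z ^ 2)) -
          a * (Real.log ((1 + z) / (1 - z))) ^ 2 ≥ a * z ^ 2) := by
  refine ⟨⟨(1 - 5 * a) / (2 * (1 - a)), div_pos (by linarith) (by linarith), ?_⟩, ?_, ?_⟩
  · exact fun z hz₀ hz hz₁ ↦ ridge_ineq_of_le_one_sub_five_mul_div ha0.le (by linarith) hz₀
      (hz.trans (min_le_left _ _)) hz₁
  · rintro rfl z hz₀ hz -
    exact ridge_ineq_of_le_98 hz₀ (hz.trans (min_le_left _ _))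
  · rintro rfl z hz₀ hz -
    exact ridge_ineq_of_le_999 hz₀ (hz.trans (min_le_left _ _))
end

section
/- (Boosting with lasso.) Let n ≥ 1, d ≥ 1, T ≥ 1, let π_1, ..., π_n ∈ ℝ^d with π_{*k} := max_{j∈[n]} |π_{j,k}| > 0 for every k ∈ [d]. Fix γ_WL ∈ (0,1) and a with 0 < a < 3/11, and set ω = a γ_WL min_{k∈[d]} max_{j∈[n]} |π_{j,k}|. Run the following recursion with Ω = ‖·‖₁: θ_0 = 0, w_{0,j} = 1/n; at each step t = 1, ..., T a feature ι(t) ∈ [d] is chosen, r_t = (1/π_{*ι(t)}) Σ_{j∈[n]} w_{t−1,j} π_{j,ι(t)}, assumed to satisfy γ_WL ≤ |r_t| < 1 (γ_WL-weak learner), α_t = (1/(2π_{*ι(t)})) log( (1+r_t)/(1−r_t) ), θ_t = θ_{t−1} + α_t·1_{ι(t)}, δ_t = ω·( ‖θ_t‖₁ − ‖θ_{t−1}‖₁ ), Z_t = Σ_{j∈[n]} w_{t−1,j} exp( −α_t π_{j,ι(t)} + δ_t ), and w_{t,j} = w_{t−1,j} exp( −α_t π_{j,ι(t)} + δ_t )/Z_t.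 Then the classifier θ_T satisfies (1/n) Σ_{j∈[n]} exp( −θ_T·π_j + ω ‖θ_T‖₁ ) ≤ exp( −a γ_WL T γ_WL² / 2 ). -/
/-!
Normalizing the weights turns the potential `(1/n) Σ_j exp(−θ_t·π_j + ω‖θ_t‖₁)` into the product
of the normalizers `Z_1 ⋯ Z_t`. By convexity of `exp` on `[−π_*, π_*]` and the choice of `α_t`,
`Z_t ≤ exp δ_t · √(1 − r_t²)`, while `δ_t ≤ ω |α_t| ≤ (a γ / 2) log ((1 + |r_t|) / (1 − |r_t|))`.
Third-order bounds on `log (1 ± s)` then give `Z_t ≤ exp (−a γ r_t² / 2) ≤ exp (−a γ γ² / 2)`.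
-/

open Finset

section

open Real Set

lemma log_one_add_le {x : ℝ} (hx : 0 ≤ x) : log (1 + x) ≤ x - x ^ 2 / 2 + x ^ 3 / 3 := by
  let g : ℝ → ℝ := fun t => t - t ^ 2 / 2 + t ^ 3 / 3 - log (1 + t)
  have hg : ∀ t, 0 ≤ t → HasDerivAt g (t ^ 3 / (1 + t)) t := by
    intro t ht
    have h := ((((hasDerivAt_id' t).sub ((hasDerivAt_pow 2 t).div_const 2)).add
      ((hasDerivAt_pow 3 t).div_const 3)).sub (((hasDerivAt_id' t).const_add 1).log
        (by positivity)))
    refine h.congr_deriv ?_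
    field_simp
    ring
  have hmono : MonotoneOn g (Ici 0) :=
    monotoneOn_of_hasDerivWithinAt_nonneg (convex_Ici 0)
      (fun t ht => (hg t ht).continuousAt.continuousWithinAt)
      (fun t ht => (hg t (interior_subset ht)).hasDerivWithinAt)
      (fun t ht => by have : (0 : ℝ) ≤ t := interior_subset ht; positivity)
  have h := hmono self_mem_Ici hx hx
  simp only [g, add_zero, log_one] at h
  linarith

lemma log_one_sub_le {x : ℝ} (hx0 : 0 ≤ x) (hx1 : x < 1) :
    log (1 - x) ≤ -x - x ^ 2 / 2 - x ^ 3 / 3 := by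
  have h := sum_le_hasSum (range 3) (fun i _ => by positivity)
    (hasSum_pow_div_log_of_abs_lt_one (abs_lt.2 ⟨by linarith, hx1⟩))
  norm_num [Finset.sum_range_succ] at h
  linarith

lemma one_add_mul_log_one_add_add_one_sub_mul_log_one_sub_le {b s : ℝ} (hb0 : 0 ≤ b)
    (hbs : 11 * b ≤ 3 * s) (hs1 : s < 1) :
    (1 + b) * log (1 + s) + (1 - b) * log (1 - s) ≤ -(b * s ^ 2) := by
  have hs0 : 0 ≤ s := by linarith
  have hadd := mul_le_mul_of_nonneg_left (log_one_add_le hs0) (by linarith : 0 ≤ 1 + b)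
  have hsub := mul_le_mul_of_nonneg_left (log_one_sub_le hs0 hs1) (by linarith : 0 ≤ 1 - b)
  -- `2 + s + 2 s² / 3 ≤ 11 / 3` for `s ≤ 1`: this is where the constant `3 / 11` comes from
  have hcubic : b * (2 * s + s ^ 2 + 2 * s ^ 3 / 3) ≤ s ^ 2 := by
    nlinarith [mul_le_mul_of_nonneg_right hbs (by positivity : 0 ≤ 2 * s + s ^ 2 + 2 * s ^ 3 / 3),
      mul_nonneg (mul_nonneg hs0 hs0) (by linarith : 0 ≤ 1 - s),
      mul_nonneg (pow_nonneg hs0 3) (by linarith : 0 ≤ 1 - s)]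
  nlinarith

lemma abs_log_one_add_sub_log_one_sub {r : ℝ} (hr : |r| < 1) :
    |log (1 + r) - log (1 - r)| = log (1 + |r|) - log (1 - |r|) := by
  obtain ⟨hr1, hr2⟩ := abs_lt.1 hr
  rcases abs_cases r with ⟨h, h0⟩ | ⟨h, h0⟩ <;> rw [h]
  · exact abs_of_nonneg (sub_nonneg.2 (log_le_log (by linarith) (by linarith)))
  · rw [abs_sub_comm, abs_of_nonneg (sub_nonneg.2 (log_le_log (by linarith) (by linarith)))]
    ring_nf

lemma log_one_add_abs_add_log_one_sub_abs (r : ℝ) :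
    log (1 + |r|) + log (1 - |r|) = log (1 + r) + log (1 - r) := by
  rcases abs_cases r with ⟨h, _⟩ | ⟨h, _⟩ <;> rw [h]
  rw [add_comm]
  ring_nf

lemma exp_neg_mul_le_chord {p x : ℝ} (hp : 0 < p) (hx : |x| ≤ p) (u : ℝ) :
    exp (-(u * x)) ≤ (p - x) / (2 * p) * exp (u * p) + (p + x) / (2 * p) * exp (-(u * p)) := by
  obtain ⟨hx1, hx2⟩ := abs_le.1 hx
  have hsum : (p - x) / (2 * p) + (p + x) / (2 * p) = 1 := by field_simp; ring
  have h := convexOn_exp.2 (mem_univ (u * p)) (mem_univ (-(u * p)))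
    (div_nonneg (by linarith : 0 ≤ p - x) (by positivity))
    (div_nonneg (by linarith : 0 ≤ p + x) (by positivity)) hsum
  rwa [smul_eq_mul, smul_eq_mul, smul_eq_mul, smul_eq_mul,
    show (p - x) / (2 * p) * (u * p) + (p + x) / (2 * p) * -(u * p) = -(u * x) by
      field_simp; ring] at h

lemma sum_mul_exp_neg_mul_le {ι : Type*} [Fintype ι] {v x : ι → ℝ} (hv : ∀ j, 0 ≤ v j)
    (hv1 : ∑ j, v j = 1) {p : ℝ} (hp : 0 < p) (hx : ∀ j, |x j| ≤ p) (u : ℝ) :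
    ∑ j, v j * exp (-(u * x j)) ≤
      (1 - (∑ j, v j * x j) / p) / 2 * exp (u * p) +
        (1 + (∑ j, v j * x j) / p) / 2 * exp (-(u * p)) := by
  calc ∑ j, v j * exp (-(u * x j))
      ≤ ∑ j, v j * ((p - x j) / (2 * p) * exp (u * p) + (p + x j) / (2 * p) * exp (-(u * p))) :=
        sum_le_sum fun j _ => mul_le_mul_of_nonneg_left (exp_neg_mul_le_chord hp (hx j) u) (hv j)
    _ = _ := by
        simp only [mul_add, ← mul_assoc, ← sum_mul, mul_div, ← sum_div, mul_sub,
          sum_sub_distrib, sum_add_distrib, hv1]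
        field_simp

lemma one_sub_mul_exp_add_one_add_mul_exp_neg {r : ℝ} (hr : |r| < 1) :
    (1 - r) / 2 * exp ((log (1 + r) - log (1 - r)) / 2) +
        (1 + r) / 2 * exp (-((log (1 + r) - log (1 - r)) / 2)) =
      exp ((log (1 + r) + log (1 - r)) / 2) := by
  obtain ⟨hr1, hr2⟩ := abs_lt.1 hr
  have hsub : (1 - r) * exp ((log (1 + r) - log (1 - r)) / 2) =
      exp ((log (1 + r) + log (1 - r)) / 2) := by
    rw [← exp_log (by linarith : 0 < 1 - r), ← exp_add, log_exp]; ring_nf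
  have hadd : (1 + r) * exp (-((log (1 + r) - log (1 - r)) / 2)) =
      exp ((log (1 + r) + log (1 - r)) / 2) := by
    rw [← exp_log (by linarith : 0 < 1 + r), ← exp_add, log_exp]; ring_nf
  linear_combination hsub / 2 + hadd / 2

lemma sum_mul_exp_le_of_weak_edge {ι : Type*} [Fintype ι] {v x : ι → ℝ} (hv : ∀ j, 0 ≤ v j)
    (hv1 : ∑ j, v j = 1) {p : ℝ} (hp : 0 < p) (hx : ∀ j, |x j| ≤ p) {r γ a α δ : ℝ}
    (hr : r = (∑ j, v j * x j) / p) (hγ0 : 0 < γ) (hγr : γ ≤ |r|) (hr1 : |r| < 1) (ha0 : 0 < a)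
    (ha1 : a < 3 / 11) (hα : α = 1 / (2 * p) * log ((1 + r) / (1 - r)))
    (hδ : δ ≤ a * γ * p * |α|) :
    ∑ j, v j * exp (-α * x j + δ) ≤ exp (-(a * γ * γ ^ 2) / 2) := by
  obtain ⟨hr_gt, hr_lt⟩ := abs_lt.1 hr1
  have hαp : α * p = (log (1 + r) - log (1 - r)) / 2 := by
    rw [hα, log_div (by linarith) (by linarith)]
    field_simp
  have hδ' : δ ≤ a * γ * (log (1 + |r|) - log (1 - |r|)) / 2 := by
    rw [← abs_log_one_add_sub_log_one_sub hr1,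
      show log (1 + r) - log (1 - r) = 2 * p * α by linarith, abs_mul,
      abs_of_pos (by positivity : 0 < 2 * p)]
    linarith
  have haγ : 0 ≤ a * γ := by positivity
  have hedge := one_add_mul_log_one_add_add_one_sub_mul_log_one_sub_le haγ (by nlinarith) hr1
  have hγr2 := mul_le_mul_of_nonneg_left (pow_le_pow_left₀ hγ0.le hγr 2) haγ
  calc ∑ j, v j * exp (-α * x j + δ) = exp δ * ∑ j, v j * exp (-(α * x j)) := by
        rw [mul_sum]
        refine sum_congr rfl fun j _ => ?_
        rw [exp_add]
        ring_nf
    _ ≤ exp δ * exp ((log (1 + r) + log (1 - r)) / 2) := by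
        gcongr
        rw [← one_sub_mul_exp_add_one_add_mul_exp_neg hr1, ← hαp, hr]
        exact sum_mul_exp_neg_mul_le hv hv1 hp hx α
    _ = exp (δ + (log (1 + |r|) + log (1 - |r|)) / 2) := by
        rw [log_one_add_abs_add_log_one_sub_abs, exp_add]
    _ ≤ exp (-(a * γ * γ ^ 2) / 2) := by
        rw [exp_le_exp]
        linarith

lemma sum_add_smul_single_mul {κ : Type*} [Fintype κ] [DecidableEq κ] (θ v : κ → ℝ) (k : κ)
    (c : ℝ) : ∑ i, (θ + c • Pi.single k 1 : κ → ℝ) i * v i = ∑ i, θ i * v i + c * v k := by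
  change (θ + c • Pi.single k 1) ⬝ᵥ v = θ ⬝ᵥ v + _
  rw [add_dotProduct, smul_dotProduct, single_dotProduct, one_mul, smul_eq_mul]

lemma mul_sum_abs_add_smul_single_sub_le {κ : Type*} [Fintype κ] [DecidableEq κ] (θ : κ → ℝ)
    (k : κ) (c : ℝ) {ω : ℝ} (hω : 0 ≤ ω) :
    ω * (∑ i, |(θ + c • Pi.single k 1 : κ → ℝ) i| - ∑ i, |θ i|) ≤ ω * |c| := by
  refine mul_le_mul_of_nonneg_left (sub_le_iff_le_add'.2 ?_) hω
  calc ∑ i, |(θ + c • Pi.single k 1 : κ → ℝ) i|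
      ≤ ∑ i, (|θ i| + |(c • Pi.single k 1 : κ → ℝ) i|) := sum_le_sum fun i _ => abs_add_le _ _
    _ = ∑ i, |θ i| + |c| := by
        rw [sum_add_distrib, ← Pi.single_smul, smul_eq_mul, mul_one]
        simp [Pi.single_apply, apply_ite]

end

section MultiplicativeWeights

variable {ι : Type*} [Fintype ι] [Nonempty ι] {T : ℕ} {F w : ℕ → ι → ℝ} {e : Fin T → ι → ℝ}

lemma weights_eq_div_sum_s19 (hw0 : w 0 = F 0) (hF0 : ∑ j, F 0 j = 1) (hFpos : ∀ t j, 0 < F t j)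
    (hF : ∀ (t : Fin T) j, F (t + 1) j = F t j * e t j)
    (hw : ∀ (t : Fin T) j, w (t + 1) j = w t j * e t j / ∑ i, w t i * e t i) :
    ∀ t ≤ T, ∀ j, w t j = F t j / ∑ i, F t i := by
  intro t
  induction t with
  | zero => intro _ j; rw [hw0, hF0, div_one]
  | succ t ih =>
    intro ht j
    have hS : 0 < ∑ i, F t i := sum_pos (fun i _ => hFpos t i) univ_nonempty
    have hFt : ∀ j, F (t + 1) j = F t j * e ⟨t, ht⟩ j := hF ⟨t, ht⟩
    have hwt : w (t + 1) j = w t j * e ⟨t, ht⟩ j / ∑ i, w t i * e ⟨t, ht⟩ i := hw ⟨t, ht⟩ j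
    rw [hwt]
    simp only [ih (Nat.le_of_succ_le ht), hFt, div_mul_eq_mul_div, ← sum_div]
    field_simp

lemma sum_le_pow_of_sum_mul_le (hw0 : w 0 = F 0) (hF0 : ∑ j, F 0 j = 1)
    (hFpos : ∀ t j, 0 < F t j) (hF : ∀ (t : Fin T) j, F (t + 1) j = F t j * e t j)
    (hw : ∀ (t : Fin T) j, w (t + 1) j = w t j * e t j / ∑ i, w t i * e t i) {c : ℝ}
    (hc : ∀ t : Fin T, (∀ j, 0 ≤ w t j) → ∑ j, w t j = 1 → ∑ j, w t j * e t j ≤ c) :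
    ∑ j, F T j ≤ c ^ T := by
  have hnorm := weights_eq_div_sum_s19 hw0 hF0 hFpos hF hw
  suffices ∀ t ≤ T, ∑ j, F t j ≤ c ^ t from this T le_rfl
  intro t
  induction t with
  | zero => intro _; rw [hF0, pow_zero]
  | succ t ih =>
    intro ht
    have htT : t ≤ T := Nat.le_of_succ_le ht
    have hS : 0 < ∑ i, F t i := sum_pos (fun i _ => hFpos t i) univ_nonempty
    have hFt : ∀ j, F (t + 1) j = F t j * e ⟨t, ht⟩ j := hF ⟨t, ht⟩
    have hsucc : ∑ j, F (t + 1) j = (∑ i, F t i) * ∑ j, w t j * e ⟨t, ht⟩ j := by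
      simp only [hnorm t htT, hFt, div_mul_eq_mul_div, ← sum_div]
      field_simp
    have hZ : ∑ j, w t j * e ⟨t, ht⟩ j ≤ c := hc ⟨t, ht⟩
      (fun j => by rw [hnorm t htT]; exact div_nonneg (hFpos t j).le hS.le)
      (by simp only [hnorm t htT, ← sum_div]; exact div_self hS.ne')
    have hZpos : 0 < ∑ j, w t j * e ⟨t, ht⟩ j := by
      have := sum_pos (fun i _ => hFpos (t + 1) i) (univ_nonempty (α := ι))
      rw [hsucc] at this
      exact pos_of_mul_pos_right this hS.le
    rw [hsucc, pow_succ]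
    exact mul_le_mul (ih htT) hZ hZpos.le (hS.le.trans (ih htT))

end MultiplicativeWeights

theorem stmt19_general (n d T : ℕ) (hn : 1 ≤ n)
    (π : Fin n → Fin d → ℝ)
    -- `π_{*k} = max_j |π_{j,k}| > 0`
    (πs : Fin d → ℝ) (hπs : ∀ k, πs k = ⨆ j : Fin n, |π j k|)
    (hπs_pos : ∀ k, 0 < πs k)
    (γ : ℝ) (hγ0 : 0 < γ)
    (a : ℝ) (ha0 : 0 < a) (ha1 : a < 3 / 11)
    (ω : ℝ) (hω : ω = a * γ * ⨅ k : Fin d, πs k)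
    (ι : Fin T → Fin d)
    (θ : ℕ → Fin d → ℝ) (hθ0 : θ 0 = 0)
    (w : ℕ → Fin n → ℝ) (hw0 : ∀ j, w 0 j = 1 / n)
    (r α δ Z : Fin T → ℝ)
    -- expected edge
    (hr : ∀ t : Fin T, r t = (1 / πs (ι t)) * ∑ j, w t.val j * π j (ι t))
    -- `γ_WL`-weak learner: `γ ≤ |r_t| < 1`
    (hweak : ∀ t : Fin T, γ ≤ |r t| ∧ |r t| < 1)
    -- leveraging coefficient, classifier update, regularization increment,
    -- normalizer, weight update
    (hα : ∀ t : Fin T,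
      α t = (1 / (2 * πs (ι t))) * Real.log ((1 + r t) / (1 - r t)))
    (hθ : ∀ t : Fin T,
      θ (t.val + 1) = θ t.val + α t • (Pi.single (ι t) 1 : Fin d → ℝ))
    (hδ : ∀ t : Fin T,
      δ t = ω * ((∑ k, |θ (t.val + 1) k|) - ∑ k, |θ t.val k|))
    (hZ : ∀ t : Fin T,
      Z t = ∑ j, w t.val j * Real.exp (-α t * π j (ι t) + δ t))
    (hw : ∀ t : Fin T, ∀ j,
      w (t.val + 1) j = w t.val j * Real.exp (-α t * π j (ι t) + δ t) / Z t) :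
    (1 / n) * ∑ j, Real.exp (-(∑ k, θ T k * π j k) + ω * ∑ k, |θ T k|) ≤
      Real.exp (-(a * γ * T * γ ^ 2) / 2) := by
  have : Nonempty (Fin n) := Fin.pos_iff_nonempty.1 hn
  have hπ_le : ∀ j k, |π j k| ≤ πs k := fun j k =>
    (le_ciSup (Finite.bddAbove_range (|π · k|)) j).trans_eq (hπs k).symm
  have hω0 : 0 ≤ ω := hω ▸ mul_nonneg (by positivity) (Real.iInf_nonneg fun k => (hπs_pos k).le)
  have hω_le : ∀ k, ω ≤ a * γ * πs k := fun k =>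
    hω ▸ mul_le_mul_of_nonneg_left (ciInf_le (Finite.bddBelow_range _) k) (by positivity)
  set F : ℕ → Fin n → ℝ := fun t j => 1 / n * Real.exp (-(∑ k, θ t k * π j k) + ω * ∑ k, |θ t k|)
  have hF0 : ∑ j, F 0 j = 1 := by
    simp [F, hθ0, (Nat.cast_ne_zero.2 (by omega) : (n : ℝ) ≠ 0)]
  have hF : ∀ (t : Fin T) j, F (t + 1) j = F t j * Real.exp (-α t * π j (ι t) + δ t) := by
    intro t j
    simp only [F, hθ t, sum_add_smul_single_mul, mul_assoc, ← Real.exp_add, hδ t]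
    ring_nf
  have hstep : ∀ t : Fin T, (∀ j, 0 ≤ w t j) → ∑ j, w t j = 1 →
      ∑ j, w t j * Real.exp (-α t * π j (ι t) + δ t) ≤ Real.exp (-(a * γ * γ ^ 2) / 2) := by
    intro t hv hv1
    have hδ_le : δ t ≤ a * γ * πs (ι t) * |α t| := by
      refine (hδ t ▸ hθ t ▸ mul_sum_abs_add_smul_single_sub_le (θ t) (ι t) (α t) hω0).trans ?_
      exact mul_le_mul_of_nonneg_right (hω_le _) (abs_nonneg _)
    exact sum_mul_exp_le_of_weak_edge hv hv1 (hπs_pos (ι t)) (fun j => hπ_le j (ι t))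
      (by rw [hr t, one_div_mul_eq_div]) hγ0 (hweak t).1 (hweak t).2 ha0 ha1 (hα t) hδ_le
  calc 1 / n * ∑ j, Real.exp (-(∑ k, θ T k * π j k) + ω * ∑ k, |θ T k|) = ∑ j, F T j :=
        mul_sum _ _ _
    _ ≤ Real.exp (-(a * γ * γ ^ 2) / 2) ^ T :=
        sum_le_pow_of_sum_mul_le (funext hw0 ▸ by simp [F, hθ0]) hF0 (fun t j => by positivity)
          hF (fun t j => hZ t ▸ hw t j) hstep
    _ = Real.exp (-(a * γ * T * γ ^ 2) / 2) := by rw [← Real.exp_nat_mul]; ring_nf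

/-- Theorem 5 (boosting with lasso): running `Ω-R.AdaBoost` with
`Ω = ‖·‖₁`, `ω = a γ_WL min_k max_j |π_{j,k}|` (for `0 < a < 3/11`) and a
`γ_WL`-weak learner, the returned classifier `θ_T` satisfies
`(1/n) Σ_j exp(−θ_T·π_j + ω‖θ_T‖₁) ≤ exp(−a γ_WL T γ_WL²/2)`. -/
theorem stmt19 (n d T : ℕ) (hn : 1 ≤ n) (hd : 1 ≤ d) (hT : 1 ≤ T)
    (π : Fin n → Fin d → ℝ)
    -- `π_{*k} = max_j |π_{j,k}| > 0`
    (πs : Fin d → ℝ) (hπs : ∀ k, πs k = ⨆ j : Fin n, |π j k|)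
    (hπs_pos : ∀ k, 0 < πs k)
    (γ : ℝ) (hγ0 : 0 < γ) (hγ1 : γ < 1)
    (a : ℝ) (ha0 : 0 < a) (ha1 : a < 3 / 11)
    (ω : ℝ) (hω : ω = a * γ * ⨅ k : Fin d, πs k)
    (ι : Fin T → Fin d)
    (θ : ℕ → Fin d → ℝ) (hθ0 : θ 0 = 0)
    (w : ℕ → Fin n → ℝ) (hw0 : ∀ j, w 0 j = 1 / n)
    (r α δ Z : Fin T → ℝ)
    -- expected edge
    (hr : ∀ t : Fin T, r t = (1 / πs (ι t)) * ∑ j, w t.val j * π j (ι t))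
    -- `γ_WL`-weak learner: `γ ≤ |r_t| < 1`
    (hweak : ∀ t : Fin T, γ ≤ |r t| ∧ |r t| < 1)
    -- leveraging coefficient, classifier update, regularization increment,
    -- normalizer, weight update
    (hα : ∀ t : Fin T,
      α t = (1 / (2 * πs (ι t))) * Real.log ((1 + r t) / (1 - r t)))
    (hθ : ∀ t : Fin T,
      θ (t.val + 1) = θ t.val + α t • (Pi.single (ι t) 1 : Fin d → ℝ))
    (hδ : ∀ t : Fin T,
      δ t = ω * ((∑ k, |θ (t.val + 1) k|) - ∑ k, |θ t.val k|))
    (hZ : ∀ t : Fin T,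
      Z t = ∑ j, w t.val j * Real.exp (-α t * π j (ι t) + δ t))
    (hw : ∀ t : Fin T, ∀ j,
      w (t.val + 1) j = w t.val j * Real.exp (-α t * π j (ι t) + δ t) / Z t) :
    (1 / n) * ∑ j, Real.exp (-(∑ k, θ T k * π j k) + ω * ∑ k, |θ T k|) ≤
      Real.exp (-(a * γ * T * γ ^ 2) / 2) :=
  stmt19_general n d T hn π πs hπs hπs_pos γ hγ0 a ha0 ha1 ω hω ι θ hθ0 w hw0 r α δ Z hr hweak hα hθ
    hδ hZ hw
end
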